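/- arXiv:2307.06817 — 5 statements merged into one kernel-verified Lean document; each statement's English description precedes it below -/
import Mathlib

section
/- Let X and Y be independent random variables on a probability space, each almost surely positive, whose distributions have densities f_X and f_Y respectively with respect to Lebesgue measure, and let Z = X/(X+Y). Then the distribution of Z has a density f_Z supported on (0,1) given, for almost every z in (0,1), by f_Z(z) = (1/z^2) * ∫_0^∞ x * f_X(x) * f_Y(x*(1-z)/z) dx; equivalently, writing s = 1/z - 1, f_Z(1/(s+1)) = (s+1)^2 * ∫_0^∞ x * f_X(x) * f_Y(s*x) dx for almost every s > 0. -/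
open MeasureTheory ProbabilityTheory Real Set

/-- 1D lintegral change of variables. -/
lemma my_lintegral_cov {s : Set ℝ} (hs : MeasurableSet s)
    {f f' : ℝ → ℝ} (hf' : ∀ x ∈ s, HasDerivWithinAt f (f' x) s x) (hf : InjOn f s)
    (g : ℝ → ENNReal) :
    ∫⁻ x in f '' s, g x = ∫⁻ x in s, ENNReal.ofReal |f' x| * g (f x) := by
  simpa only [ContinuousLinearMap.det_toSpanSingleton] using
    MeasureTheory.lintegral_image_eq_lintegral_abs_det_fderiv_mul volume hs
      (fun x hx => (hf' x hx).hasFDerivWithinAt) hf g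

lemma my_image (x : ℝ) (hx : 0 < x) :
    (fun z : ℝ => x * (1 - z) / z) '' Ioo 0 1 = Ioi 0 := by
  ext y
  simp only [mem_image, mem_Ioo, mem_Ioi]
  constructor
  · rintro ⟨z, ⟨hz0, hz1⟩, rfl⟩
    exact div_pos (mul_pos hx (by linarith)) hz0
  · intro hy
    refine ⟨x / (x + y), ⟨div_pos hx (by linarith), (div_lt_one (by linarith)).mpr (by linarith)⟩, ?_⟩
    have hxy : x + y ≠ 0 := by positivity
    field_simp
    ring

lemma my_deriv (x z : ℝ) (hz : z ≠ 0) :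
    HasDerivAt (fun z : ℝ => x * (1 - z) / z) (-(x / z ^ 2)) z := by
  have h := (((hasDerivAt_id z).const_sub (1 : ℝ)).const_mul x).div (hasDerivAt_id z) hz
  refine h.congr_deriv ?_
  simp only [id]
  field_simp
  ring

lemma my_inj (x : ℝ) (hx : 0 < x) : InjOn (fun z : ℝ => x * (1 - z) / z) (Ioo 0 1) := by
  intro z hz w hw h
  simp only at h
  have hz0 : z ≠ 0 := ne_of_gt hz.1
  have hw0 : w ≠ 0 := ne_of_gt hw.1
  field_simp at h
  nlinarith [h, hx]

/-- change of variables specialized -/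
lemma my_cov (x : ℝ) (hx : 0 < x) (G : ℝ → ENNReal) :
    ∫⁻ y in Ioi (0:ℝ), G y
      = ∫⁻ z in Ioo (0:ℝ) 1, ENNReal.ofReal (x / z ^ 2) * G (x * (1 - z) / z) := by
  rw [← my_image x hx, my_lintegral_cov measurableSet_Ioo
    (f' := fun z => -(x / z ^ 2)) (fun z hz => (my_deriv x z (ne_of_gt hz.1)).hasDerivWithinAt)
    (my_inj x hx) G]
  refine setLIntegral_congr_fun measurableSet_Ioo (fun z hz => ?_)
  rw [abs_neg, abs_of_pos (div_pos hx (pow_pos hz.1 2))]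

/-- drop the nonpositive part of a lintegral when the density vanishes there -/
lemma my_drop {g : ℝ → ENNReal} (h0 : ∫⁻ x in Iic (0:ℝ), g x = 0) (hg : Measurable g)
    (m : ℝ → ENNReal) :
    ∫⁻ x, g x * m x = ∫⁻ x in Ioi (0:ℝ), g x * m x := by
  rw [← lintegral_add_compl (fun x => g x * m x) measurableSet_Ioi]
  have hae : ∀ᵐ x ∂(volume.restrict (Iic (0:ℝ))), g x = 0 := (lintegral_eq_zero_iff hg).mp h0
  have hz : ∫⁻ x in (Ioi (0:ℝ))ᶜ, g x * m x = 0 := by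
    rw [compl_Ioi]
    have h := lintegral_congr_ae (μ := volume.restrict (Iic (0:ℝ)))
      (f := fun x => g x * m x) (g := fun _ => 0) (hae.mono fun x hx => by simp [hx])
    simpa using h
  rw [hz, add_zero]

theorem ratio_density
    {Ω : Type*} [MeasurableSpace Ω] (P : Measure Ω) [IsProbabilityMeasure P]
    (X Y : Ω → ℝ) (hXm : Measurable X) (hYm : Measurable Y)
    (hindep : IndepFun X Y P)
    (hXpos : ∀ᵐ ω ∂P, 0 < X ω) (hYpos : ∀ᵐ ω ∂P, 0 < Y ω)
    (fX fY : ℝ → ℝ) (hfXm : Measurable fX) (hfYm : Measurable fY)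
    (hfX0 : ∀ x, 0 ≤ fX x) (hfY0 : ∀ y, 0 ≤ fY y)
    (hX : P.map X = volume.withDensity (fun x => ENNReal.ofReal (fX x)))
    (hY : P.map Y = volume.withDensity (fun y => ENNReal.ofReal (fY y))) :
    ∃ fZ : ℝ → ℝ, Measurable fZ ∧ (∀ z, 0 ≤ fZ z) ∧
      P.map (fun ω => X ω / (X ω + Y ω)) =
        (volume.restrict (Ioo 0 1)).withDensity (fun z => ENNReal.ofReal (fZ z)) ∧
      (∀ᵐ z ∂(volume.restrict (Ioo (0:ℝ) 1)),
        fZ z = (1 / z ^ 2) * ∫ x in Ioi (0:ℝ), x * fX x * fY (x * (1 - z) / z)) ∧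
      (∀ᵐ s ∂(volume.restrict (Ioi (0:ℝ))),
        fZ (1 / (s + 1)) = (s + 1) ^ 2 * ∫ x in Ioi (0:ℝ), x * fX x * fY (s * x)) := by
  classical
  have hgXm : Measurable (fun x => ENNReal.ofReal (fX x)) := ENNReal.measurable_ofReal.comp hfXm
  have hgYm : Measurable (fun y => ENNReal.ofReal (fY y)) := ENNReal.measurable_ofReal.comp hfYm
  have hZm : Measurable (fun ω => X ω / (X ω + Y ω)) := hXm.div (hXm.add hYm)
  have hXYm : Measurable (fun ω => (X ω, Y ω)) := hXm.prodMk hYm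
  have hgm : Measurable (fun p : ℝ × ℝ => p.1 / (p.1 + p.2)) :=
    measurable_fst.div (measurable_fst.add measurable_snd)
  have hprod : P.map (fun ω => (X ω, Y ω)) = (P.map X).prod (P.map Y) :=
    (indepFun_iff_map_prod_eq_prod_map_map hXm.aemeasurable hYm.aemeasurable).mp hindep
  haveI : IsProbabilityMeasure (P.map X) := Measure.isProbabilityMeasure_map hXm.aemeasurable
  haveI : IsProbabilityMeasure (P.map Y) := Measure.isProbabilityMeasure_map hYm.aemeasurable
  -- density vanishes on nonpositive part
  have hXIic : ∫⁻ x in Iic (0:ℝ), ENNReal.ofReal (fX x) = 0 := by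
    have h1 : P.map X (Iic 0) = 0 := by
      rw [Measure.map_apply hXm measurableSet_Iic]
      exact measure_mono_null (fun ω (h : X ω ≤ 0) => not_lt.mpr h) (ae_iff.mp hXpos)
    rwa [hX, withDensity_apply _ measurableSet_Iic] at h1
  have hYIic : ∫⁻ y in Iic (0:ℝ), ENNReal.ofReal (fY y) = 0 := by
    have h1 : P.map Y (Iic 0) = 0 := by
      rw [Measure.map_apply hYm measurableSet_Iic]
      exact measure_mono_null (fun ω (h : Y ω ≤ 0) => not_lt.mpr h) (ae_iff.mp hYpos)
    rwa [hY, withDensity_apply _ measurableSet_Iic] at h1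
  -- the density function (ENNReal valued)
  obtain ⟨L, hLdef⟩ : ∃ L : ℝ → ENNReal, L = fun z => ∫⁻ x in Ioi (0:ℝ),
      ENNReal.ofReal x * ENNReal.ofReal (fX x) * ENNReal.ofReal (fY (x * (1 - z) / z)) := ⟨_, rfl⟩
  obtain ⟨F, hFdef⟩ : ∃ F : ℝ → ENNReal,
      F = fun z => ENNReal.ofReal (1 / z ^ 2) * L z := ⟨_, rfl⟩
  have harg : Measurable (fun p : ℝ × ℝ => p.2 * (1 - p.1) / p.1) :=
    (measurable_snd.mul (measurable_const.sub measurable_fst)).div measurable_fst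
  have hLm : Measurable L := by
    rw [hLdef]
    apply Measurable.lintegral_prod_right' (f := fun p : ℝ × ℝ =>
      ENNReal.ofReal p.2 * ENNReal.ofReal (fX p.2) * ENNReal.ofReal (fY (p.2 * (1 - p.1) / p.1)))
    exact ((ENNReal.measurable_ofReal.comp measurable_snd).mul
      (hgXm.comp measurable_snd)).mul (hgYm.comp harg)
  have hFm : Measurable F := by
    rw [hFdef]
    exact (ENNReal.measurable_ofReal.comp (measurable_const.div (measurable_id.pow_const 2))).mul hLm
  -- the main measure identity with density F
  have hPZ : P.map (fun ω => X ω / (X ω + Y ω)) = (volume.restrict (Ioo 0 1)).withDensity F := by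
    refine Measure.ext fun A hA => ?_
    have hSA : MeasurableSet ((fun p : ℝ × ℝ => p.1 / (p.1 + p.2)) ⁻¹' A) := hgm hA
    have hmT : Measurable fun x =>
        (P.map Y) (Prod.mk x ⁻¹' ((fun p : ℝ × ℝ => p.1 / (p.1 + p.2)) ⁻¹' A)) :=
      measurable_measure_prodMk_left hSA
    have h1 : P.map (fun ω => X ω / (X ω + Y ω)) A
        = ∫⁻ x, (P.map Y) (Prod.mk x ⁻¹' ((fun p : ℝ × ℝ => p.1 / (p.1 + p.2)) ⁻¹' A))
            ∂(P.map X) := by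
      rw [Measure.map_apply hZm hA]
      have h2 : P ((fun ω => X ω / (X ω + Y ω)) ⁻¹' A)
          = P.map (fun ω => (X ω, Y ω)) ((fun p : ℝ × ℝ => p.1 / (p.1 + p.2)) ⁻¹' A) := by
        rw [Measure.map_apply hXYm hSA]; rfl
      rw [h2, hprod, Measure.prod_apply hSA]
    rw [h1, hX, lintegral_withDensity_eq_lintegral_mul _ hgXm hmT]
    simp only [Pi.mul_apply]
    rw [my_drop hXIic hgXm _]
    -- inner computation for x > 0
    have h2 : ∀ x ∈ Ioi (0:ℝ),
        ENNReal.ofReal (fX x)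
          * (P.map Y) (Prod.mk x ⁻¹' ((fun p : ℝ × ℝ => p.1 / (p.1 + p.2)) ⁻¹' A))
        = ∫⁻ z in Ioo (0:ℝ) 1, ENNReal.ofReal (fX x) * (ENNReal.ofReal (x / z ^ 2) *
            (ENNReal.ofReal (fY (x * (1 - z) / z)) * A.indicator 1 z)) := by
      intro x hx
      have hx' : (0:ℝ) < x := hx
      have hT : MeasurableSet (Prod.mk x ⁻¹' ((fun p : ℝ × ℝ => p.1 / (p.1 + p.2)) ⁻¹' A)) :=
        measurable_prodMk_left hSA
      have hptw : ∀ y : ℝ,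
          (Prod.mk x ⁻¹' ((fun p : ℝ × ℝ => p.1 / (p.1 + p.2)) ⁻¹' A)).indicator
            (fun y => ENNReal.ofReal (fY y)) y
          = ENNReal.ofReal (fY y)
            * (Prod.mk x ⁻¹' ((fun p : ℝ × ℝ => p.1 / (p.1 + p.2)) ⁻¹' A)).indicator 1 y := by
        intro y
        by_cases hy : y ∈ Prod.mk x ⁻¹' ((fun p : ℝ × ℝ => p.1 / (p.1 + p.2)) ⁻¹' A) <;>
          simp [hy]
      have hInner : (P.map Y) (Prod.mk x ⁻¹' ((fun p : ℝ × ℝ => p.1 / (p.1 + p.2)) ⁻¹' A))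
          = ∫⁻ z in Ioo (0:ℝ) 1, ENNReal.ofReal (x / z ^ 2) *
              (ENNReal.ofReal (fY (x * (1 - z) / z)) * A.indicator 1 z) := by
        rw [hY, withDensity_apply _ hT, ← lintegral_indicator hT]
        rw [lintegral_congr hptw, my_drop hYIic hgYm _, my_cov x hx']
        refine setLIntegral_congr_fun measurableSet_Ioo
          (fun z hz => ?_)
        congr 2
        have hz0 : z ≠ 0 := ne_of_gt hz.1
        have hx0 : x ≠ 0 := ne_of_gt hx'
        have hkey : x / (x + x * (1 - z) / z) = z := by
          have hd : x + x * (1 - z) / z = x / z := by field_simp; ring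
          rw [hd, div_div_eq_mul_div, mul_comm, mul_div_assoc, div_self hx0, mul_one]
        by_cases hzA : z ∈ A
        · have hmem : x * (1 - z) / z ∈
              Prod.mk x ⁻¹' ((fun p : ℝ × ℝ => p.1 / (p.1 + p.2)) ⁻¹' A) := by
            simp only [mem_preimage]
            rwa [hkey]
          simp [hmem, hzA]
        · have hmem : x * (1 - z) / z ∉
              Prod.mk x ⁻¹' ((fun p : ℝ × ℝ => p.1 / (p.1 + p.2)) ⁻¹' A) := by
            simp only [mem_preimage]
            rwa [hkey]
          simp [hmem, hzA]
      rw [hInner]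
      exact (lintegral_const_mul' _ _ ENNReal.ofReal_ne_top).symm
    rw [setLIntegral_congr_fun measurableSet_Ioi h2]
    -- swap order of integration
    have hmu : AEMeasurable (Function.uncurry fun (x z : ℝ) =>
        ENNReal.ofReal (fX x) * (ENNReal.ofReal (x / z ^ 2) *
          (ENNReal.ofReal (fY (x * (1 - z) / z)) * A.indicator 1 z)))
        ((volume.restrict (Ioi (0:ℝ))).prod (volume.restrict (Ioo (0:ℝ) 1))) := by
      apply Measurable.aemeasurable
      apply Measurable.mul
      · exact hgXm.comp measurable_fst
      apply Measurable.mul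
      · exact ENNReal.measurable_ofReal.comp (measurable_fst.div (measurable_snd.pow_const 2))
      apply Measurable.mul
      · exact hgYm.comp ((measurable_fst.mul (measurable_const.sub measurable_snd)).div
          measurable_snd)
      · exact (measurable_one.indicator hA).comp measurable_snd
    rw [lintegral_lintegral_swap hmu]
    -- identify inner integral with indicator of F
    have h3 : ∀ z ∈ Ioo (0:ℝ) 1,
        (∫⁻ x in Ioi (0:ℝ), ENNReal.ofReal (fX x) * (ENNReal.ofReal (x / z ^ 2) *
          (ENNReal.ofReal (fY (x * (1 - z) / z)) * A.indicator 1 z)))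
        = A.indicator F z := by
      intro z hz
      by_cases hzA : z ∈ A
      · have hind : A.indicator (1 : ℝ → ENNReal) z = 1 := by simp [hzA]
        rw [Set.indicator_of_mem hzA F, hFdef]
        have hcongr : ∀ x ∈ Ioi (0:ℝ),
            ENNReal.ofReal (fX x) * (ENNReal.ofReal (x / z ^ 2) *
              (ENNReal.ofReal (fY (x * (1 - z) / z)) * A.indicator 1 z))
            = ENNReal.ofReal (1 / z ^ 2) *
              (ENNReal.ofReal x * ENNReal.ofReal (fX x)
                * ENNReal.ofReal (fY (x * (1 - z) / z))) := by
          intro x hx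
          rw [hind, mul_one]
          have hc : ENNReal.ofReal (x / z ^ 2)
              = ENNReal.ofReal x * ENNReal.ofReal (1 / z ^ 2) := by
            rw [← ENNReal.ofReal_mul (le_of_lt hx)]
            congr 1
            field_simp
          rw [hc]
          ring
        rw [setLIntegral_congr_fun measurableSet_Ioi hcongr,
          lintegral_const_mul' _ _ ENNReal.ofReal_ne_top, hLdef]
      · rw [Set.indicator_of_notMem hzA F]
        have hzero : ∀ x ∈ Ioi (0:ℝ),
            ENNReal.ofReal (fX x) * (ENNReal.ofReal (x / z ^ 2) *
              (ENNReal.ofReal (fY (x * (1 - z) / z)) * A.indicator 1 z)) = 0 := by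
          intro x hx
          simp [Set.indicator_of_notMem hzA]
        rw [setLIntegral_congr_fun measurableSet_Ioi hzero]
        simp
    rw [setLIntegral_congr_fun measurableSet_Ioo h3,
      lintegral_indicator hA, withDensity_apply _ hA]
  -- finiteness a.e.
  haveI : IsProbabilityMeasure (P.map (fun ω => X ω / (X ω + Y ω))) :=
    Measure.isProbabilityMeasure_map hZm.aemeasurable
  have hfin : ∀ᵐ z ∂(volume.restrict (Ioo (0:ℝ) 1)), F z < ⊤ := by
    apply ae_lt_top hFm
    have h1 : ((volume.restrict (Ioo (0:ℝ) 1)).withDensity F) univ = 1 := by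
      rw [← hPZ]; exact measure_univ
    rw [withDensity_apply _ MeasurableSet.univ, Measure.restrict_univ] at h1
    rw [h1]
    exact ENNReal.one_ne_top
  -- the pointwise density formula
  have hkey : ∀ z : ℝ, (F z).toReal
      = (1 / z ^ 2) * ∫ x in Ioi (0:ℝ), x * fX x * fY (x * (1 - z) / z) := by
    intro z
    have h0 : 0 ≤ᵐ[volume.restrict (Ioi (0:ℝ))]
        fun x => x * fX x * fY (x * (1 - z) / z) := by
      filter_upwards [ae_restrict_mem measurableSet_Ioi] with x hx
      exact mul_nonneg (mul_nonneg (le_of_lt hx) (hfX0 x)) (hfY0 _)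
    have hm : AEStronglyMeasurable (fun x => x * fX x * fY (x * (1 - z) / z))
        (volume.restrict (Ioi (0:ℝ))) :=
      (((measurable_id.mul hfXm).mul (hfYm.comp
        ((measurable_id.mul_const (1 - z)).div_const z)))).aestronglyMeasurable
    have hInt : ∫ x in Ioi (0:ℝ), x * fX x * fY (x * (1 - z) / z) = (L z).toReal := by
      rw [integral_eq_lintegral_of_nonneg_ae h0 hm]
      congr 1
      rw [hLdef]
      refine setLIntegral_congr_fun measurableSet_Ioi
        (fun x hx => ?_)
      rw [ENNReal.ofReal_mul (mul_nonneg (le_of_lt hx) (hfX0 x)),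
        ENNReal.ofReal_mul (le_of_lt hx)]
    rw [hInt, hFdef]
    simp only
    rw [ENNReal.toReal_mul, ENNReal.toReal_ofReal (by positivity)]
  refine ⟨fun z => (F z).toReal, hFm.ennreal_toReal, fun z => ENNReal.toReal_nonneg, ?_, ?_, ?_⟩
  · rw [hPZ]
    refine withDensity_congr_ae ?_
    filter_upwards [hfin] with z hz
    rw [ENNReal.ofReal_toReal hz.ne]
  · exact Filter.Eventually.of_forall fun z => hkey z
  · filter_upwards [ae_restrict_mem measurableSet_Ioi] with s hs
    have hs1 : (0:ℝ) < s + 1 := by linarith [mem_Ioi.mp hs]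
    rw [hkey (1 / (s + 1))]
    have e1 : 1 / (1 / (s + 1)) ^ 2 = (s + 1) ^ 2 := by
      field_simp
    have e2 : ∀ x : ℝ, x * (1 - 1 / (s + 1)) / (1 / (s + 1)) = s * x := by
      intro x
      field_simp
      ring
    rw [e1]
    congr 1
    simp only [e2]
end

section
/- Let X and Y be independent random variables on a probability space, each almost surely positive, with Lebesgue densities f_X and f_Y, and let Z = X/(X+Y) with density f_Z. Suppose there exist positive continuous functions A, B on (0,∞) and constants λ > 0, θ > 0 such that f_Y(s*x) = A(s) * B(x) * exp(-λ*(s*x)^θ) for all s, x > 0, and suppose f_X is continuous on (0,∞). If h : (0,∞) → ℝ is a continuous function such that for every t > 0 the integral ∫_0^∞ exp(-t*y) * h(y) dy converges and equals (1/(A(t^(1/θ))*(t^(1/θ)+1)^2)) * f_Z(1/(t^(1/θ)+1)), and y ↦ y^{(2/θ)-1} * B(y^{1/θ}) * f_X(y^{1/θ}) * exp(-t*y) is integrable on (0,∞) for every t > 0, then for every x > 0: f_X(x) = (λ*θ/(x^{2-θ} * B(x))) * h(λ * x^θ). -/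
open MeasureTheory ProbabilityTheory Real Set
open scoped ENNReal NNReal

private lemma lintegral_image_deriv {s : Set ℝ} {f f' : ℝ → ℝ}
    (hs : MeasurableSet s) (hf' : ∀ x ∈ s, HasDerivWithinAt f (f' x) s x) (hf : Set.InjOn f s)
    (g : ℝ → ℝ≥0∞) :
    ∫⁻ x in f '' s, g x = ∫⁻ x in s, ENNReal.ofReal |f' x| * g (f x) := by
  simpa only [ContinuousLinearMap.det_toSpanSingleton] using
    MeasureTheory.lintegral_image_eq_lintegral_abs_det_fderiv_mul volume hs
      (fun x hx => (hf' x hx).hasFDerivWithinAt) hf g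

private lemma seq_tendsto_mem {N : Set ℝ} (hN : volume N = 0) {a b z : ℝ} (hz : z ∈ Ioo a b) :
    ∃ u : ℕ → ℝ, (∀ n, u n ∈ Ioo a b ∧ u n ∉ N) ∧
      Filter.Tendsto u Filter.atTop (nhds z) := by
  have hsel : ∀ n : ℕ, ∃ w, w ∈ Ioo z (min b (z + 1/(n+1))) \ N := by
    intro n
    have hlt : z < min b (z + 1/(n+1)) := by
      refine lt_min hz.2 ?_
      have : (0:ℝ) < 1/(n+1) := by positivity
      linarith
    have hpos : volume (Ioo z (min b (z + 1/(n+1))) \ N) ≠ 0 := by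
      rw [measure_diff_null hN, Real.volume_Ioo]
      simp only [ne_eq, ENNReal.ofReal_eq_zero, not_le]
      linarith
    exact nonempty_of_measure_ne_zero hpos
  choose u hu using hsel
  refine ⟨u, fun n => ?_, ?_⟩
  · obtain ⟨⟨h1, h2⟩, h3⟩ := hu n
    exact ⟨⟨lt_trans hz.1 h1, lt_of_lt_of_le h2 (min_le_left _ _)⟩, h3⟩
  · have hub : ∀ n : ℕ, u n ≤ z + 1/(n+1) :=
      fun n => le_of_lt (lt_of_lt_of_le (hu n).1.2 (min_le_right _ _))
    have hlb : ∀ n : ℕ, z ≤ u n := fun n => le_of_lt (hu n).1.1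
    have h2 : Filter.Tendsto (fun n : ℕ => z + 1/(n+1:ℝ)) Filter.atTop (nhds z) := by
      have := tendsto_one_div_add_atTop_nhds_zero_nat (𝕜 := ℝ)
      simpa using Filter.Tendsto.const_add z this
    exact tendsto_of_tendsto_of_tendsto_of_le_of_le tendsto_const_nhds h2 hlb hub

private lemma laplace_contAt {f : ℝ → ℝ}
    (hint : ∀ t ∈ Ioi (0:ℝ), IntegrableOn (fun y => Real.exp (-(t*y)) * f y) (Ioi 0) volume)
    {t₀ : ℝ} (ht₀ : 0 < t₀) :
    ContinuousAt (fun t => ∫ y in Ioi (0:ℝ), Real.exp (-(t*y)) * f y) t₀ := by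
  have hhalf : (0:ℝ) < t₀/2 := by linarith
  have hev : ∀ᶠ t in nhds t₀, t₀/2 < t := eventually_gt_nhds (by linarith)
  apply continuousAt_of_dominated (bound := fun y => Real.exp (-(t₀/2*y)) * |f y|)
  · filter_upwards [hev] with t ht
    exact (hint t (mem_Ioi.mpr (lt_trans hhalf ht))).aestronglyMeasurable
  · filter_upwards [hev] with t ht
    filter_upwards [ae_restrict_mem measurableSet_Ioi] with y hy
    have hy0 : 0 ≤ y := le_of_lt hy
    rw [norm_mul, Real.norm_eq_abs, Real.norm_eq_abs, abs_of_pos (Real.exp_pos _)]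
    exact mul_le_mul_of_nonneg_right (Real.exp_le_exp.mpr (by nlinarith)) (abs_nonneg _)
  · have := (hint (t₀/2) (mem_Ioi.mpr hhalf)).abs
    refine this.congr (Filter.Eventually.of_forall fun y => ?_)
    show |rexp (-(t₀/2*y)) * f y| = rexp (-(t₀/2*y)) * |f y|
    rw [abs_mul, abs_of_pos (Real.exp_pos _)]
  · refine Filter.Eventually.of_forall fun y => ?_
    exact (((continuous_id.mul continuous_const).neg.rexp).mul continuous_const).continuousAt

private lemma neglog_image : (fun u : ℝ => -Real.log u) '' Ioo 0 1 = Ioi 0 := by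
  ext y
  constructor
  · rintro ⟨u, ⟨hu0, hu1⟩, rfl⟩
    have : Real.log u < 0 := Real.log_neg hu0 hu1
    simp only [mem_Ioi]; linarith
  · intro hy
    simp only [mem_Ioi] at hy
    exact ⟨Real.exp (-y), ⟨Real.exp_pos _, Real.exp_lt_one_iff.mpr (by linarith)⟩,
      by show -Real.log (Real.exp (-y)) = y; rw [Real.log_exp]; ring⟩

private lemma neglog_deriv :
    ∀ u ∈ Ioo (0:ℝ) 1, HasDerivWithinAt (fun u : ℝ => -Real.log u) (-u⁻¹) (Ioo 0 1) u :=
  fun u hu => ((Real.hasDerivAt_log (ne_of_gt hu.1)).neg).hasDerivWithinAt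

private lemma neglog_inj : Set.InjOn (fun u : ℝ => -Real.log u) (Ioo 0 1) :=
  fun a ha b hb hab =>
    Real.log_injOn_pos (mem_Ioi.mpr ha.1) (mem_Ioi.mpr hb.1) (neg_injective hab)

private lemma unit_transform {D : ℝ → ℝ} {t : ℝ} (ht : 0 < t) :
    (IntegrableOn (fun y => Real.exp (-(t*y)) * D y) (Ioi 0) volume ↔
      IntegrableOn (fun u => u ^ (t-1) * D (-Real.log u)) (Ioo 0 1) volume) ∧
    ∫ y in Ioi (0:ℝ), Real.exp (-(t*y)) * D y
      = ∫ u in Ioo (0:ℝ) 1, u ^ (t-1) * D (-Real.log u) := by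
  have key : ∀ u ∈ Ioo (0:ℝ) 1,
      |(-u⁻¹)| • (Real.exp (-(t * (-Real.log u))) * D (-Real.log u))
        = u ^ (t-1) * D (-Real.log u) := by
    intro u hu
    have hu0 : (0:ℝ) < u := hu.1
    have h1 : |(-u⁻¹)| = u⁻¹ := by rw [abs_neg, abs_of_pos (inv_pos.mpr hu0)]
    have h2 : Real.exp (-(t * (-Real.log u))) = u ^ t := by
      rw [Real.rpow_def_of_pos hu0]; ring_nf
    rw [h1, h2, smul_eq_mul, Real.rpow_sub hu0, Real.rpow_one, div_eq_mul_inv]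
    ring
  constructor
  · rw [← neglog_image,
      integrableOn_image_iff_integrableOn_abs_deriv_smul measurableSet_Ioo neglog_deriv neglog_inj]
    exact integrableOn_congr_fun key measurableSet_Ioo
  · rw [← neglog_image,
      integral_image_eq_integral_abs_deriv_smul measurableSet_Ioo neglog_deriv neglog_inj]
    exact setIntegral_congr_fun measurableSet_Ioo key

private lemma laplace_uniq {D : ℝ → ℝ} (hDc : ContinuousOn D (Ioi 0))
    (hint : ∀ t ∈ Ioi (0:ℝ), IntegrableOn (fun y => Real.exp (-(t*y)) * D y) (Ioi 0) volume)
    (hzero : ∀ t ∈ Ioi (0:ℝ), (∫ y in Ioi (0:ℝ), Real.exp (-(t*y)) * D y) = 0) :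
    ∀ y ∈ Ioi (0:ℝ), D y = 0 := by
  set ψ : ℝ → ℝ := fun u => D (-Real.log u) with hψ
  -- integrability and vanishing of ∫ u^(t-1) ψ
  have hkey : ∀ t : ℝ, 0 < t → IntegrableOn (fun u => u ^ (t-1) * ψ u) (Ioo 0 1) volume ∧
      (∫ u in Ioo (0:ℝ) 1, u ^ (t-1) * ψ u) = 0 := by
    intro t ht
    exact ⟨(unit_transform ht).1.mp (hint t (mem_Ioi.mpr ht)),
      by rw [← (unit_transform ht).2]; exact hzero t (mem_Ioi.mpr ht)⟩
  -- ψ integrable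
  have hψint : IntegrableOn ψ (Ioo 0 1) volume := by
    have := (hkey 1 one_pos).1
    refine this.congr_fun (fun u hu => ?_) measurableSet_Ioo
    show u ^ ((1:ℝ)-1) * ψ u = ψ u
    rw [sub_self, Real.rpow_zero, one_mul]
  -- natural moments
  have hmom : ∀ n : ℕ, IntegrableOn (fun u => u ^ n * ψ u) (Ioo 0 1) volume ∧
      (∫ u in Ioo (0:ℝ) 1, u ^ n * ψ u) = 0 := by
    intro n
    have h := hkey (n+1) (by positivity)
    have he : ∀ u ∈ Ioo (0:ℝ) 1, u ^ ((n:ℝ)+1-1) * ψ u = u ^ n * ψ u := by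
      intro u hu
      rw [add_sub_cancel_right, Real.rpow_natCast]
    constructor
    · exact h.1.congr_fun he measurableSet_Ioo
    · rw [← setIntegral_congr_fun measurableSet_Ioo he]; exact h.2
  -- polynomials
  have hpoly : ∀ p : Polynomial ℝ, (∫ u in Ioo (0:ℝ) 1, p.eval u * ψ u) = 0 := by
    intro p
    have he : ∀ u : ℝ, p.eval u * ψ u
        = ∑ i ∈ Finset.range (p.natDegree + 1), p.coeff i * (u ^ i * ψ u) := by
      intro u
      rw [Polynomial.eval_eq_sum_range, Finset.sum_mul]
      congr 1; ext i; ring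
    rw [integral_congr_ae (Filter.Eventually.of_forall he), integral_finset_sum]
    · refine Finset.sum_eq_zero fun i _ => ?_
      rw [integral_const_mul, (hmom i).2, mul_zero]
    · exact fun i _ => ((hmom i).1.const_mul _)
  -- continuous functions
  have hmul : ∀ c : ℝ → ℝ, Continuous c → IntegrableOn (fun u => c u * ψ u) (Ioo 0 1) volume := by
    intro c hc
    obtain ⟨C, hC⟩ := (isCompact_Icc (a := (0:ℝ)) (b := 1)).exists_bound_of_continuousOn
      hc.continuousOn
    refine Integrable.mono' (hψint.abs.const_mul (|C|+1)) ?_ ?_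
    · exact (hc.aestronglyMeasurable).restrict.mul hψint.aestronglyMeasurable
    · filter_upwards [ae_restrict_mem measurableSet_Ioo] with u hu
      rw [norm_mul, Real.norm_eq_abs, Real.norm_eq_abs]
      have h1 : |c u| ≤ |C| + 1 := by
        have h2 := hC u (mem_Icc.mpr ⟨le_of_lt hu.1, le_of_lt hu.2⟩)
        rw [Real.norm_eq_abs] at h2
        have h3 := le_abs_self C
        linarith
      exact mul_le_mul_of_nonneg_right h1 (abs_nonneg _)
  have hcont : ∀ c : ℝ → ℝ, Continuous c → (∫ u in Ioo (0:ℝ) 1, c u * ψ u) = 0 := by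
    intro c hc
    set J := ∫ u in Ioo (0:ℝ) 1, c u * ψ u with hJdef
    set I := ∫ u in Ioo (0:ℝ) 1, |ψ u| with hIdef
    have hI0 : 0 ≤ I := integral_nonneg fun u => abs_nonneg _
    have hbound : ∀ ε : ℝ, 0 < ε → |J| ≤ ε * I := by
      intro ε hε
      obtain ⟨p, hp⟩ := exists_polynomial_near_of_continuousOn 0 1 c hc.continuousOn ε hε
      have hpint : IntegrableOn (fun u => p.eval u * ψ u) (Ioo 0 1) volume :=
        hmul _ p.continuous
      have hJeq : J = ∫ u in Ioo (0:ℝ) 1, (c u - p.eval u) * ψ u := by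
        have hsub : ∀ u : ℝ, (c u - p.eval u) * ψ u = c u * ψ u - p.eval u * ψ u :=
          fun u => by ring
        rw [integral_congr_ae (Filter.Eventually.of_forall hsub),
          integral_sub (hmul _ hc) hpint, hpoly p, sub_zero]
      rw [hJeq]
      have hnorm : ‖∫ u in Ioo (0:ℝ) 1, (c u - p.eval u) * ψ u‖
          ≤ ∫ u in Ioo (0:ℝ) 1, ε * |ψ u| := by
        refine norm_integral_le_of_norm_le (hψint.abs.const_mul ε) ?_
        filter_upwards [ae_restrict_mem measurableSet_Ioo] with u hu
        rw [norm_mul, Real.norm_eq_abs, Real.norm_eq_abs]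
        have h1 : |c u - p.eval u| ≤ ε := by
          have h2 := hp u (mem_Icc.mpr ⟨le_of_lt hu.1, le_of_lt hu.2⟩)
          rw [abs_sub_comm] at h2
          exact le_of_lt h2
        exact mul_le_mul_of_nonneg_right h1 (abs_nonneg _)
      rw [Real.norm_eq_abs] at hnorm
      rwa [integral_const_mul] at hnorm
    have hJ0 : |J| ≤ 0 := by
      by_contra hcon
      push_neg at hcon
      have h1 := hbound (|J|/(2*(I+1))) (by positivity)
      rw [div_mul_eq_mul_div, le_div_iff₀ (by positivity : (0:ℝ) < 2*(I+1))] at h1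
      nlinarith
    exact abs_eq_zero.mp (le_antisymm hJ0 (abs_nonneg _))
  -- indicator version and conclusion
  set Ψ : ℝ → ℝ := (Ioo (0:ℝ) 1).indicator ψ with hΨdef
  have hΨint : Integrable Ψ volume := by
    rw [hΨdef, integrable_indicator_iff measurableSet_Ioo]
    exact hψint
  have hΨ0 : ∀ᵐ u, Ψ u = 0 := by
    apply ae_eq_zero_of_integral_contDiff_smul_eq_zero hΨint.locallyIntegrable
    intro c hc hcsupp
    have he : ∀ x : ℝ, c x • Ψ x = (Ioo (0:ℝ) 1).indicator (fun u => c u * ψ u) x := by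
      intro x
      by_cases hx : x ∈ Ioo (0:ℝ) 1 <;>
        simp [hΨdef, Set.indicator_apply, hx]
    rw [integral_congr_ae (Filter.Eventually.of_forall he),
      integral_indicator measurableSet_Ioo]
    exact hcont c hc.continuous
  have hNnull : volume {u : ℝ | ¬ Ψ u = 0} = 0 := by
    rw [← ae_iff]; exact hΨ0
  intro y hy
  rw [mem_Ioi] at hy
  have hu₀ : Real.exp (-y) ∈ Ioo (0:ℝ) 1 :=
    ⟨Real.exp_pos _, Real.exp_lt_one_iff.mpr (by linarith)⟩
  obtain ⟨v, hv, hvt⟩ := seq_tendsto_mem hNnull hu₀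
  have hval : ∀ n, D (-Real.log (v n)) = 0 := by
    intro n
    have h1 : Ψ (v n) = 0 := not_not.mp (fun hne => (hv n).2 hne)
    rwa [hΨdef, Set.indicator_of_mem (hv n).1] at h1
  have hlogt : Filter.Tendsto (fun n => -Real.log (v n)) Filter.atTop (nhds y) := by
    have h1 : Filter.Tendsto (fun n => -Real.log (v n)) Filter.atTop
        (nhds (-Real.log (Real.exp (-y)))) :=
      ((Real.continuousAt_log (ne_of_gt hu₀.1)).neg.tendsto.comp hvt)
    rwa [Real.log_exp, neg_neg] at h1
  have hDct : ContinuousAt D y :=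
    hDc.continuousAt (isOpen_Ioi.mem_nhds (mem_Ioi.mpr hy))
  have hfin : Filter.Tendsto (fun n => D (-Real.log (v n))) Filter.atTop (nhds (D y)) :=
    hDct.tendsto.comp hlogt
  rw [funext hval] at hfin
  exact (tendsto_nhds_unique hfin tendsto_const_nhds).symm ▸ rfl

private lemma ratio_image {x : ℝ} (hx : 0 < x) :
    (fun z : ℝ => x * (1-z) / z) '' Ioo 0 1 = Ioi 0 := by
  ext y
  constructor
  · rintro ⟨z, ⟨hz0, hz1⟩, rfl⟩
    exact mem_Ioi.mpr (div_pos (mul_pos hx (by linarith)) hz0)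
  · intro hy
    rw [mem_Ioi] at hy
    refine ⟨x/(x+y), ⟨by positivity, ?_⟩, ?_⟩
    · rw [div_lt_one (by positivity)]; linarith
    · show x * (1 - x/(x+y)) / (x/(x+y)) = y
      rw [div_div_eq_mul_div]
      have hxy : x + y ≠ 0 := by positivity
      field_simp
      ring

private lemma ratio_deriv {x : ℝ} (hx : 0 < x) :
    ∀ z ∈ Ioo (0:ℝ) 1, HasDerivWithinAt (fun z : ℝ => x * (1-z) / z) (-(x/z^2)) (Ioo 0 1) z := by
  intro z hz
  have hz0 : z ≠ 0 := ne_of_gt hz.1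
  have h1 : HasDerivAt (fun z : ℝ => x * z⁻¹ - x) (x * (-(z^2)⁻¹)) z :=
    ((hasDerivAt_inv hz0).const_mul x).sub_const x
  have h2 : HasDerivAt (fun z : ℝ => x * (1-z) / z) (x * (-(z^2)⁻¹)) z := by
    refine h1.congr_of_eventuallyEq ?_
    filter_upwards [IsOpen.mem_nhds isOpen_compl_singleton
      (by simpa using hz0 : z ∈ ({0}ᶜ : Set ℝ))] with w hw
    have hw0 : w ≠ 0 := by simpa using hw
    field_simp
  have h3 : x * (-(z^2)⁻¹) = -(x/z^2) := by field_simp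
  rw [h3] at h2
  exact h2.hasDerivWithinAt

private lemma ratio_inj {x : ℝ} (hx : 0 < x) :
    Set.InjOn (fun z : ℝ => x * (1-z) / z) (Ioo 0 1) := by
  intro a ha b hb hab
  simp only at hab
  have ha0 : a ≠ 0 := ne_of_gt ha.1
  have hb0 : b ≠ 0 := ne_of_gt hb.1
  rw [div_eq_div_iff ha0 hb0] at hab
  have h2 : x * (b - a) = 0 := by linear_combination hab
  rcases mul_eq_zero.mp h2 with h | h
  · exact absurd h (ne_of_gt hx)
  · linarith

private lemma rpow_image {c : ℝ} (hc : 0 < c) :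
    (fun w : ℝ => w ^ c) '' Ioi 0 = Ioi 0 := by
  ext y
  constructor
  · rintro ⟨w, hw, rfl⟩
    exact mem_Ioi.mpr (Real.rpow_pos_of_pos hw c)
  · intro hy
    rw [mem_Ioi] at hy
    refine ⟨y ^ c⁻¹, mem_Ioi.mpr (Real.rpow_pos_of_pos hy _), ?_⟩
    show (y ^ c⁻¹) ^ c = y
    rw [← Real.rpow_mul (le_of_lt hy), inv_mul_cancel₀ (ne_of_gt hc), Real.rpow_one]

private lemma rpow_deriv {c : ℝ} :
    ∀ w ∈ Ioi (0:ℝ), HasDerivWithinAt (fun w : ℝ => w ^ c) (c * w ^ (c-1)) (Ioi 0) w :=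
  fun w hw => (Real.hasDerivAt_rpow_const (Or.inl (ne_of_gt hw))).hasDerivWithinAt

private lemma rpow_inj {c : ℝ} (hc : 0 < c) :
    Set.InjOn (fun w : ℝ => w ^ c) (Ioi 0) := by
  intro a ha b hb hab
  simp only at hab
  have h1 := congrArg (fun t : ℝ => t ^ c⁻¹) hab
  rwa [← Real.rpow_mul (le_of_lt ha), ← Real.rpow_mul (le_of_lt hb),
    mul_inv_cancel₀ (ne_of_gt hc), Real.rpow_one, Real.rpow_one] at h1

private lemma lintegral_image_deriv' {s : Set ℝ} {f f' : ℝ → ℝ}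
    (hs : MeasurableSet s) (hf' : ∀ x ∈ s, HasDerivWithinAt f (f' x) s x) (hf : Set.InjOn f s)
    (g : ℝ → ℝ≥0∞) :
    ∫⁻ x in f '' s, g x = ∫⁻ x in s, ENNReal.ofReal |f' x| * g (f x) := by
  simpa only [ContinuousLinearMap.det_toSpanSingleton] using
    MeasureTheory.lintegral_image_eq_lintegral_abs_det_fderiv_mul volume hs
      (fun x hx => (hf' x hx).hasFDerivWithinAt) hf g

private noncomputable def Fden (fX fY : ℝ → ℝ) (z : ℝ) : ℝ≥0∞ :=
  ∫⁻ x in Ioi 0, ENNReal.ofReal (fX x) *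
    (ENNReal.ofReal (x / z^2) * ENNReal.ofReal (fY (x * (1-z) / z)))

private lemma Fden_measurable {fX fY : ℝ → ℝ} (hfXm : Measurable fX) (hfYm : Measurable fY) :
    Measurable (Fden fX fY) := by
  have h1 : Measurable (fun p : ℝ × ℝ => ENNReal.ofReal (fX p.2) *
      (ENNReal.ofReal (p.2 / p.1^2) * ENNReal.ofReal (fY (p.2 * (1-p.1) / p.1)))) := by
    refine ((hfXm.comp measurable_snd).ennreal_ofReal).mul (Measurable.mul (f := fun p : ℝ × ℝ => ENNReal.ofReal (p.2 / p.1^2)) (g := fun p : ℝ × ℝ => ENNReal.ofReal (fY (p.2 * (1-p.1) / p.1))) ?_ ?_)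
    · exact (measurable_snd.div (measurable_fst.pow_const 2)).ennreal_ofReal
    · exact (hfYm.comp ((measurable_snd.mul
        (measurable_const.sub measurable_fst)).div measurable_fst)).ennreal_ofReal
  exact h1.lintegral_prod_right'

private lemma map_ratio_eq {fX fY : ℝ → ℝ} (hfXm : Measurable fX) (hfYm : Measurable fY)
    (hfXz : (fun x => ENNReal.ofReal (fX x)) =ᵐ[volume.restrict (Iic (0:ℝ))] 0)
    (hfYz : (fun y => ENNReal.ofReal (fY y)) =ᵐ[volume.restrict (Iic (0:ℝ))] 0)
    (hfin : IsFiniteMeasure (volume.withDensity fun y => ENNReal.ofReal (fY y)))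
    {S : Set ℝ} (hS : MeasurableSet S) :
    ((volume.withDensity fun x => ENNReal.ofReal (fX x)).prod
      (volume.withDensity fun y => ENNReal.ofReal (fY y))).map
        (fun p : ℝ × ℝ => p.1 / (p.1 + p.2)) S
      = ∫⁻ z in S, Fden fX fY z ∂(volume.restrict (Ioo 0 1)) := by
  haveI := hfin
  have hr : Measurable (fun p : ℝ × ℝ => p.1 / (p.1 + p.2)) :=
    measurable_fst.div (measurable_fst.add measurable_snd)
  set T : Set (ℝ × ℝ) := (fun p : ℝ × ℝ => p.1 / (p.1 + p.2)) ⁻¹' S with hTdef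
  have hT : MeasurableSet T := hr hS
  rw [Measure.map_apply hr hS]
  have hind : Measurable (T.indicator (1 : ℝ × ℝ → ℝ≥0∞)) := measurable_one.indicator hT
  -- step 1: iterated lintegral over volume
  have step1 :
      ((volume.withDensity fun x => ENNReal.ofReal (fX x)).prod
        (volume.withDensity fun y => ENNReal.ofReal (fY y))) T
      = ∫⁻ x, ENNReal.ofReal (fX x) *
          ∫⁻ y, ENNReal.ofReal (fY y) * T.indicator 1 (x, y) ∂volume ∂volume := by
    rw [← lintegral_indicator_one hT, lintegral_prod _ hind.aemeasurable]
    have hinner : ∀ x : ℝ,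
        (∫⁻ y, T.indicator 1 (x, y)
            ∂(volume.withDensity fun y => ENNReal.ofReal (fY y)))
        = ∫⁻ y, ENNReal.ofReal (fY y) * T.indicator 1 (x, y) ∂volume := by
      intro x
      have hg : Measurable (fun y : ℝ => T.indicator 1 (x, y)) :=
        hind.comp measurable_prodMk_left
      rw [lintegral_withDensity_eq_lintegral_mul volume hfYm.ennreal_ofReal hg]
      rfl
    rw [lintegral_congr hinner]
    have hH : Measurable fun x : ℝ =>
        ∫⁻ y, ENNReal.ofReal (fY y) * T.indicator 1 (x, y) ∂volume :=
      (((hfYm.comp measurable_snd).ennreal_ofReal).mul hind).lintegral_prod_right'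
    rw [lintegral_withDensity_eq_lintegral_mul volume hfXm.ennreal_ofReal hH]
    rfl
  rw [step1]
  -- step 2: restrict outer integral to Ioi 0
  have step2 :
      (∫⁻ x, ENNReal.ofReal (fX x) *
          ∫⁻ y, ENNReal.ofReal (fY y) * T.indicator 1 (x, y) ∂volume ∂volume)
      = ∫⁻ x in Ioi 0, ENNReal.ofReal (fX x) *
          ∫⁻ y, ENNReal.ofReal (fY y) * T.indicator 1 (x, y) ∂volume ∂volume := by
    rw [← lintegral_add_compl (fun x => ENNReal.ofReal (fX x) *
        ∫⁻ y, ENNReal.ofReal (fY y) * T.indicator 1 (x, y) ∂volume) measurableSet_Ioi]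
    have hz : (∫⁻ x in (Ioi (0:ℝ))ᶜ, ENNReal.ofReal (fX x) *
        ∫⁻ y, ENNReal.ofReal (fY y) * T.indicator 1 (x, y) ∂volume ∂volume) = 0 := by
      rw [compl_Ioi]
      have : ∀ᵐ x ∂(volume.restrict (Iic (0:ℝ))),
          (ENNReal.ofReal (fX x) *
            ∫⁻ y, ENNReal.ofReal (fY y) * T.indicator 1 (x, y) ∂volume) = 0 := by
        filter_upwards [hfXz] with x hx
        rw [hx, Pi.zero_apply, zero_mul]
      rw [lintegral_congr_ae this, lintegral_zero]
    rw [hz, add_zero]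
  rw [step2]
  -- step 3: restrict inner integral to Ioi 0
  have step3 : ∀ x : ℝ,
      (∫⁻ y, ENNReal.ofReal (fY y) * T.indicator 1 (x, y) ∂volume)
      = ∫⁻ y in Ioi 0, ENNReal.ofReal (fY y) * T.indicator 1 (x, y) ∂volume := by
    intro x
    rw [← lintegral_add_compl (fun y => ENNReal.ofReal (fY y) * T.indicator 1 (x, y))
      measurableSet_Ioi]
    have hz : (∫⁻ y in (Ioi (0:ℝ))ᶜ, ENNReal.ofReal (fY y) * T.indicator 1 (x, y) ∂volume)
        = 0 := by
      rw [compl_Ioi]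
      have : ∀ᵐ y ∂(volume.restrict (Iic (0:ℝ))),
          (ENNReal.ofReal (fY y) * T.indicator 1 (x, y)) = 0 := by
        filter_upwards [hfYz] with y hy
        rw [hy, Pi.zero_apply, zero_mul]
      rw [lintegral_congr_ae this, lintegral_zero]
    rw [hz, add_zero]
  -- step 4: change of variables in inner integral
  have step4 : ∀ x ∈ Ioi (0:ℝ),
      (∫⁻ y in Ioi 0, ENNReal.ofReal (fY y) * T.indicator 1 (x, y) ∂volume)
      = ∫⁻ z in Ioo 0 1, ENNReal.ofReal (x/z^2) *
          (ENNReal.ofReal (fY (x*(1-z)/z)) * S.indicator 1 z) ∂volume := by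
    intro x hx
    rw [mem_Ioi] at hx
    rw [← ratio_image hx,
      lintegral_image_deriv' measurableSet_Ioo (ratio_deriv hx) (ratio_inj hx)]
    refine setLIntegral_congr_fun_ae measurableSet_Ioo
      (Filter.Eventually.of_forall fun z hz => ?_)
    have hz0 : (0:ℝ) < z := hz.1
    have habs : |(-(x/z^2))| = x/z^2 := by
      rw [abs_neg, abs_of_pos (by positivity)]
    have hval : x / (x + x*(1-z)/z) = z := by
      have hden : x + x*(1-z)/z = x/z := by field_simp; ring
      rw [hden, div_div_eq_mul_div, mul_div_cancel_left₀ _ (ne_of_gt hx)]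
    have hmem : ((x, x*(1-z)/z) ∈ T) ↔ z ∈ S := by
      simp only [hTdef, Set.mem_preimage]
      rw [hval]
    have hindeq : T.indicator (1 : ℝ × ℝ → ℝ≥0∞) (x, x*(1-z)/z)
        = S.indicator (1 : ℝ → ℝ≥0∞) z := by
      by_cases hzS : z ∈ S
      · rw [Set.indicator_of_mem (hmem.mpr hzS), Set.indicator_of_mem hzS]
        rfl
      · rw [Set.indicator_of_notMem (fun hc => hzS (hmem.mp hc)),
          Set.indicator_of_notMem hzS]
    rw [habs, hindeq]
  -- assemble, push constant inside, swap
  calc ∫⁻ x in Ioi 0, ENNReal.ofReal (fX x) *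
          ∫⁻ y, ENNReal.ofReal (fY y) * T.indicator 1 (x, y) ∂volume ∂volume
      = ∫⁻ x in Ioi 0, ∫⁻ z in Ioo 0 1, ENNReal.ofReal (fX x) * (ENNReal.ofReal (x/z^2) *
          (ENNReal.ofReal (fY (x*(1-z)/z)) * S.indicator 1 z)) ∂volume ∂volume := by
        refine setLIntegral_congr_fun_ae measurableSet_Ioi
          (Filter.Eventually.of_forall fun x hx => ?_)
        rw [step3 x, step4 x hx, lintegral_const_mul' _ _ ENNReal.ofReal_ne_top]
    _ = ∫⁻ z in Ioo 0 1, ∫⁻ x in Ioi 0, ENNReal.ofReal (fX x) * (ENNReal.ofReal (x/z^2) *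
          (ENNReal.ofReal (fY (x*(1-z)/z)) * S.indicator 1 z)) ∂volume ∂volume := by
        apply lintegral_lintegral_swap
        apply Measurable.aemeasurable
        refine ((hfXm.comp measurable_fst).ennreal_ofReal).mul (Measurable.mul ?_ (Measurable.mul ?_ ?_))
        · exact (measurable_fst.div (measurable_snd.pow_const 2)).ennreal_ofReal
        · exact (hfYm.comp ((measurable_fst.mul
            (measurable_const.sub measurable_snd)).div measurable_snd)).ennreal_ofReal
        · exact (measurable_one.indicator hS).comp measurable_snd
    _ = ∫⁻ z in Ioo 0 1, S.indicator (1 : ℝ → ℝ≥0∞) z * Fden fX fY z ∂volume := by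
        refine setLIntegral_congr_fun_ae measurableSet_Ioo
          (Filter.Eventually.of_forall fun z hz => ?_)
        have hrw : ∀ x : ℝ, ENNReal.ofReal (fX x) * (ENNReal.ofReal (x/z^2) *
            (ENNReal.ofReal (fY (x*(1-z)/z)) * S.indicator 1 z))
            = S.indicator (1 : ℝ → ℝ≥0∞) z * (ENNReal.ofReal (fX x) * (ENNReal.ofReal (x/z^2) *
              ENNReal.ofReal (fY (x*(1-z)/z)))) := by
          intro x; ring
        rw [lintegral_congr hrw, lintegral_const_mul' _ _ ?hne]
        case hne =>
          by_cases hzS : z ∈ S <;> simp [Set.indicator_apply, hzS]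
        rfl
    _ = ∫⁻ z in Ioo 0 1, S.indicator (Fden fX fY) z ∂volume := by
        refine setLIntegral_congr_fun_ae measurableSet_Ioo
          (Filter.Eventually.of_forall fun z hz => ?_)
        by_cases hzS : z ∈ S <;> simp [Set.indicator_apply, hzS]
    _ = ∫⁻ z in S, Fden fX fY z ∂(volume.restrict (Ioo 0 1)) := by
        exact lintegral_indicator hS _

private lemma rpow_image' {c : ℝ} (hc : 0 < c) :
    (fun w : ℝ => w ^ c) '' Ioi 0 = Ioi 0 := by
  ext y
  constructor
  · rintro ⟨w, hw, rfl⟩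
    exact mem_Ioi.mpr (Real.rpow_pos_of_pos hw c)
  · intro hy
    rw [mem_Ioi] at hy
    refine ⟨y ^ c⁻¹, mem_Ioi.mpr (Real.rpow_pos_of_pos hy _), ?_⟩
    show (y ^ c⁻¹) ^ c = y
    rw [← Real.rpow_mul (le_of_lt hy), inv_mul_cancel₀ (ne_of_gt hc), Real.rpow_one]

private lemma rpow_deriv' {c : ℝ} :
    ∀ w ∈ Ioi (0:ℝ), HasDerivWithinAt (fun w : ℝ => w ^ c) (c * w ^ (c-1)) (Ioi 0) w :=
  fun w hw => (Real.hasDerivAt_rpow_const (Or.inl (ne_of_gt hw))).hasDerivWithinAt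

private lemma rpow_inj' {c : ℝ} (hc : 0 < c) :
    Set.InjOn (fun w : ℝ => w ^ c) (Ioi 0) := by
  intro a ha b hb hab
  simp only at hab
  have h1 := congrArg (fun t : ℝ => t ^ c⁻¹) hab
  rwa [← Real.rpow_mul (le_of_lt ha), ← Real.rpow_mul (le_of_lt hb),
    mul_inv_cancel₀ (ne_of_gt hc), Real.rpow_one, Real.rpow_one] at h1

private lemma lintegral_image_deriv'' {s : Set ℝ} {f f' : ℝ → ℝ}
    (hs : MeasurableSet s) (hf' : ∀ x ∈ s, HasDerivWithinAt f (f' x) s x) (hf : Set.InjOn f s)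
    (g : ℝ → ℝ≥0∞) :
    ∫⁻ x in f '' s, g x = ∫⁻ x in s, ENNReal.ofReal |f' x| * g (f x) := by
  simpa only [ContinuousLinearMap.det_toSpanSingleton] using
    MeasureTheory.lintegral_image_eq_lintegral_abs_det_fderiv_mul volume hs
      (fun x hx => (hf' x hx).hasFDerivWithinAt) hf g

private lemma subst_rpow {fX B : ℝ → ℝ} {lam θ t : ℝ} (hθ : 0 < θ) (ht : 0 < lam * t)
    (hB : ∀ x ∈ Ioi (0:ℝ), 0 < B x) (hfX0 : ∀ x, 0 ≤ fX x)
    (hI : IntegrableOn (fun y => y ^ (2/θ-1) * B (y^(1/θ)) * fX (y^(1/θ)) *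
      Real.exp (-(lam*t*y))) (Ioi 0) volume) :
    (∫⁻ x in Ioi 0, ENNReal.ofReal (x * fX x * B x * Real.exp (-(lam * t * x^θ))))
      = ENNReal.ofReal ((1/θ) * ∫ y in Ioi (0:ℝ),
          y ^ (2/θ-1) * B (y^(1/θ)) * fX (y^(1/θ)) * Real.exp (-(lam*t*y))) := by
  have hc : (0:ℝ) < 1/θ := by positivity
  have h1 : (∫⁻ x in Ioi 0, ENNReal.ofReal (x * fX x * B x * Real.exp (-(lam * t * x^θ))))
      = ∫⁻ w in Ioi 0, ENNReal.ofReal ((1/θ) * (w ^ (2/θ-1) * B (w^(1/θ)) * fX (w^(1/θ)) *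
          Real.exp (-(lam*t*w)))) := by
    conv_lhs => rw [← rpow_image' hc]
    rw [lintegral_image_deriv'' measurableSet_Ioi rpow_deriv' (rpow_inj' hc)]
    refine setLIntegral_congr_fun_ae measurableSet_Ioi
      (Filter.Eventually.of_forall fun w hw => ?_)
    rw [mem_Ioi] at hw
    have hwpow : (0:ℝ) < w ^ (1/θ-1) := Real.rpow_pos_of_pos hw _
    have habs : |1/θ * w ^ (1/θ-1)| = 1/θ * w ^ (1/θ-1) := abs_of_pos (by positivity)
    have hww : (w ^ (1/θ)) ^ θ = w := by
      rw [← Real.rpow_mul (le_of_lt hw), one_div_mul_cancel (ne_of_gt hθ), Real.rpow_one]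
    have hpow : w ^ (1/θ-1) * w ^ (1/θ) = w ^ (2/θ-1) := by
      rw [← Real.rpow_add hw]
      congr 1
      ring
    rw [habs, hww, ← ENNReal.ofReal_mul (by positivity)]
    congr 1
    rw [← hpow]
    ring
  rw [h1, ← ofReal_integral_eq_lintegral_ofReal (hI.const_mul (1/θ)) ?_, integral_const_mul]
  filter_upwards [ae_restrict_mem measurableSet_Ioi] with w hw
  rw [mem_Ioi] at hw
  have h2 : 0 < B (w ^ (1/θ)) := hB _ (mem_Ioi.mpr (Real.rpow_pos_of_pos hw _))
  have h3 : 0 ≤ fX (w ^ (1/θ)) := hfX0 _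
  have h4 : (0:ℝ) < w ^ (2/θ-1) := Real.rpow_pos_of_pos hw _
  positivity

set_option maxHeartbeats 1000000 in

theorem theorem_one_inverse_laplace
    {Ω : Type*} [MeasurableSpace Ω] (P : Measure Ω) [IsProbabilityMeasure P]
    (X Y : Ω → ℝ) (hXm : Measurable X) (hYm : Measurable Y)
    (hindep : IndepFun X Y P)
    (hXpos : ∀ᵐ ω ∂P, 0 < X ω) (hYpos : ∀ᵐ ω ∂P, 0 < Y ω)
    (fX fY fZ A B : ℝ → ℝ)
    (hfXm : Measurable fX) (hfYm : Measurable fY) (hfZm : Measurable fZ)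
    (hfX0 : ∀ x, 0 ≤ fX x) (hfY0 : ∀ y, 0 ≤ fY y) (hfZ0 : ∀ z, 0 ≤ fZ z)
    (hX : P.map X = volume.withDensity (fun x => ENNReal.ofReal (fX x)))
    (hY : P.map Y = volume.withDensity (fun y => ENNReal.ofReal (fY y)))
    (hZ : P.map (fun ω => X ω / (X ω + Y ω)) =
      (volume.restrict (Ioo 0 1)).withDensity (fun z => ENNReal.ofReal (fZ z)))
    (lam θ : ℝ) (hlam : 0 < lam) (hθ : 0 < θ)
    (hA : ∀ s ∈ Ioi (0:ℝ), 0 < A s) (hB : ∀ x ∈ Ioi (0:ℝ), 0 < B x)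
    (hAc : ContinuousOn A (Ioi 0)) (hBc : ContinuousOn B (Ioi 0))
    (hfXc : ContinuousOn fX (Ioi 0))
    (hdecomp : ∀ s ∈ Ioi (0:ℝ), ∀ x ∈ Ioi (0:ℝ),
      fY (s * x) = A s * B x * Real.exp (-(lam * (s * x) ^ θ)))
    (h : ℝ → ℝ) (hhc : ContinuousOn h (Ioi 0))
    (hLaplace : ∀ t ∈ Ioi (0:ℝ),
      IntegrableOn (fun y => Real.exp (-(t * y)) * h y) (Ioi 0) volume ∧
      ∫ y in Ioi (0:ℝ), Real.exp (-(t * y)) * h y =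
        (1 / (A (t ^ (1 / θ)) * (t ^ (1 / θ) + 1) ^ 2)) * fZ (1 / (t ^ (1 / θ) + 1)))
    (hInt : ∀ t ∈ Ioi (0:ℝ),
      IntegrableOn (fun y => y ^ (2 / θ - 1) * B (y ^ (1 / θ)) * fX (y ^ (1 / θ)) *
        Real.exp (-(t * y))) (Ioi 0) volume) :
    ∀ x ∈ Ioi (0:ℝ), fX x = (lam * θ / (x ^ (2 - θ) * B x)) * h (lam * x ^ θ) := by
  -- densities vanish a.e. on nonpositive reals
  have hXz : (fun x => ENNReal.ofReal (fX x)) =ᵐ[volume.restrict (Iic (0:ℝ))] 0 := by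
    have h0 : P.map X (Iic 0) = 0 := by
      rw [Measure.map_apply hXm measurableSet_Iic]
      have hset : X ⁻¹' Iic 0 = {ω | ¬ 0 < X ω} := by
        ext ω; simp [not_lt]
      rw [hset, ← ae_iff]
      exact hXpos
    rw [hX, withDensity_apply _ measurableSet_Iic] at h0
    exact (lintegral_eq_zero_iff hfXm.ennreal_ofReal).mp h0
  have hYz : (fun y => ENNReal.ofReal (fY y)) =ᵐ[volume.restrict (Iic (0:ℝ))] 0 := by
    have h0 : P.map Y (Iic 0) = 0 := by
      rw [Measure.map_apply hYm measurableSet_Iic]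
      have hset : Y ⁻¹' Iic 0 = {ω | ¬ 0 < Y ω} := by
        ext ω; simp [not_lt]
      rw [hset, ← ae_iff]
      exact hYpos
    rw [hY, withDensity_apply _ measurableSet_Iic] at h0
    exact (lintegral_eq_zero_iff hfYm.ennreal_ofReal).mp h0
  haveI hPY : IsProbabilityMeasure (P.map Y) := Measure.isProbabilityMeasure_map hYm.aemeasurable
  have hfinY : IsFiniteMeasure (volume.withDensity fun y => ENNReal.ofReal (fY y)) := by
    rw [← hY]; infer_instance
  have hr : Measurable (fun p : ℝ × ℝ => p.1 / (p.1 + p.2)) :=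
    measurable_fst.div (measurable_fst.add measurable_snd)
  -- the joint law and the law of the ratio
  have hjoint : P.map (fun ω => (X ω, Y ω)) =
      (volume.withDensity fun x => ENNReal.ofReal (fX x)).prod
        (volume.withDensity fun y => ENNReal.ofReal (fY y)) := by
    rw [← hX, ← hY]
    exact (indepFun_iff_map_prod_eq_prod_map_map hXm.aemeasurable hYm.aemeasurable).mp hindep
  have hmapZ : P.map (fun ω => X ω / (X ω + Y ω)) =
      ((volume.withDensity fun x => ENNReal.ofReal (fX x)).prod
        (volume.withDensity fun y => ENNReal.ofReal (fY y))).map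
          (fun p : ℝ × ℝ => p.1 / (p.1 + p.2)) := by
    rw [← hjoint, Measure.map_map hr (hXm.prodMk hYm)]
    rfl
  -- a.e. identification of the density of Z
  have hae : (fun z => ENNReal.ofReal (fZ z)) =ᵐ[volume.restrict (Ioo 0 1)] Fden fX fY := by
    apply ae_eq_of_forall_setLIntegral_eq_of_sigmaFinite hfZm.ennreal_ofReal
      (Fden_measurable hfXm hfYm)
    intro s hs _
    have h1 := map_ratio_eq hfXm hfYm hXz hYz hfinY hs
    rw [← hmapZ, hZ, withDensity_apply _ hs] at h1
    exact h1
  -- the real Laplace-type function k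
  set k : ℝ → ℝ := fun t => (1/θ) * ∫ y in Ioi (0:ℝ),
      y ^ (2/θ-1) * B (y^(1/θ)) * fX (y^(1/θ)) * Real.exp (-(lam*t*y)) with hkdef
  -- Part II : Fden in terms of k
  have hFden : ∀ z ∈ Ioo (0:ℝ) 1, Fden fX fY z
      = ENNReal.ofReal (A ((1-z)/z) * ((1-z)/z + 1)^2) *
        ENNReal.ofReal (k (((1-z)/z)^θ)) := by
    intro z hz
    have hz0 : (0:ℝ) < z := hz.1
    have hupos : 0 < (1-z)/z := div_pos (by linarith [hz.2]) hz0
    have huz : (1-z)/z + 1 = 1/z := by field_simp; ring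
    have hApos := hA _ (mem_Ioi.mpr hupos)
    have hstep : ∀ x ∈ Ioi (0:ℝ),
        ENNReal.ofReal (fX x) * (ENNReal.ofReal (x / z^2) * ENNReal.ofReal (fY (x*(1-z)/z)))
        = ENNReal.ofReal (A ((1-z)/z) * ((1-z)/z+1)^2) *
            ENNReal.ofReal (x * fX x * B x * Real.exp (-(lam * ((1-z)/z)^θ * x^θ))) := by
      intro x hx
      rw [mem_Ioi] at hx
      have hdec : fY (x*(1-z)/z) = A ((1-z)/z) * B x *
          Real.exp (-(lam * (((1-z)/z)*x)^θ)) := by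
        have hxz : x*(1-z)/z = ((1-z)/z) * x := by ring
        rw [hxz]
        exact hdecomp _ (mem_Ioi.mpr hupos) x (mem_Ioi.mpr hx)
      have hux : (((1-z)/z)*x)^θ = ((1-z)/z)^θ * x^θ :=
        Real.mul_rpow (le_of_lt hupos) (le_of_lt hx)
      have hxz2 : x / z^2 = x * ((1-z)/z+1)^2 := by
        rw [huz]
        field_simp
      have hre : fX x * (x/z^2 * fY (x*(1-z)/z))
          = (A ((1-z)/z) * ((1-z)/z+1)^2) *
            (x * fX x * B x * Real.exp (-(lam * ((1-z)/z)^θ * x^θ))) := by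
        rw [hdec, hux, hxz2]
        ring
      rw [← ENNReal.ofReal_mul (by positivity : (0:ℝ) ≤ x/z^2),
        ← ENNReal.ofReal_mul (hfX0 x), hre,
        ENNReal.ofReal_mul (by positivity : (0:ℝ) ≤ A ((1-z)/z) * ((1-z)/z+1)^2)]
    show (∫⁻ x in Ioi 0, ENNReal.ofReal (fX x) *
        (ENNReal.ofReal (x / z^2) * ENNReal.ofReal (fY (x * (1-z) / z)))) = _
    rw [setLIntegral_congr_fun_ae measurableSet_Ioi (Filter.Eventually.of_forall hstep),
      lintegral_const_mul' _ _ ENNReal.ofReal_ne_top]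
    congr 1
    have ht' : (0:ℝ) < lam * ((1-z)/z)^θ := by
      have := Real.rpow_pos_of_pos hupos θ
      positivity
    exact subst_rpow hθ ht' hB hfX0 (hInt _ (mem_Ioi.mpr ht'))
  -- k is nonnegative
  have hknn : ∀ t : ℝ, 0 ≤ k t := by
    intro t
    rw [hkdef]
    refine mul_nonneg (by positivity) (setIntegral_nonneg measurableSet_Ioi fun y hy => ?_)
    rw [mem_Ioi] at hy
    have h2 : 0 < B (y ^ (1/θ)) := hB _ (mem_Ioi.mpr (Real.rpow_pos_of_pos hy _))
    have h3 : 0 ≤ fX (y ^ (1/θ)) := hfX0 _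
    have h4 : (0:ℝ) < y ^ (2/θ-1) := Real.rpow_pos_of_pos hy _
    positivity
  -- a.e. real identity for fZ
  have haeR : ∀ᵐ z ∂(volume : Measure ℝ), z ∈ Ioo (0:ℝ) 1 →
      fZ z = A ((1-z)/z) * ((1-z)/z + 1)^2 * k (((1-z)/z)^θ) := by
    have h1 := (ae_restrict_iff' measurableSet_Ioo).mp hae
    filter_upwards [h1] with z hz hzmem
    have h2 := hz hzmem
    have hz0 : (0:ℝ) < z := hzmem.1
    have hupos : 0 < (1-z)/z := div_pos (by linarith [hzmem.2]) hz0
    have hApos := hA _ (mem_Ioi.mpr hupos)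
    rw [hFden z hzmem, ← ENNReal.ofReal_mul (by positivity)] at h2
    have hrhs : 0 ≤ A ((1-z)/z) * ((1-z)/z + 1)^2 * k (((1-z)/z)^θ) :=
      mul_nonneg (by positivity) (hknn _)
    exact (ENNReal.ofReal_eq_ofReal_iff (hfZ0 z) hrhs).mp h2
  have hN : volume {z : ℝ | ¬ (z ∈ Ioo (0:ℝ) 1 →
      fZ z = A ((1-z)/z) * ((1-z)/z + 1)^2 * k (((1-z)/z)^θ))} = 0 := by
    rw [← ae_iff]
    exact haeR
  -- Laplace transform of h and continuity facts
  set Lh : ℝ → ℝ := fun t => ∫ y in Ioi (0:ℝ), Real.exp (-(t*y)) * h y with hLhdef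
  have hLhc : ∀ t₀ ∈ Ioi (0:ℝ), ContinuousAt Lh t₀ := by
    intro t₀ ht₀
    exact laplace_contAt (fun t ht => (hLaplace t ht).1) (mem_Ioi.mp ht₀)
  have hintB : ∀ s ∈ Ioi (0:ℝ), IntegrableOn (fun y => Real.exp (-(s*y)) *
      (y ^ (2/θ-1) * B (y^(1/θ)) * fX (y^(1/θ)))) (Ioi 0) volume := by
    intro s hs
    exact (hInt s hs).congr (Filter.Eventually.of_forall fun y => mul_comm _ _)
  have hkeq : k = fun t => (1/θ) * ∫ y in Ioi (0:ℝ), Real.exp (-((lam*t)*y)) *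
      (y ^ (2/θ-1) * B (y^(1/θ)) * fX (y^(1/θ))) := by
    funext t
    show (1/θ) * (∫ y in Ioi (0:ℝ),
        y ^ (2/θ-1) * B (y^(1/θ)) * fX (y^(1/θ)) * Real.exp (-(lam*t*y))) = _
    congr 1
    exact integral_congr_ae (Filter.Eventually.of_forall fun y => mul_comm _ _)
  have hkc : ∀ t₀ ∈ Ioi (0:ℝ), ContinuousAt k t₀ := by
    intro t₀ ht₀
    rw [mem_Ioi] at ht₀
    rw [hkeq]
    have hc1 : ContinuousAt (fun s => ∫ y in Ioi (0:ℝ), Real.exp (-(s*y)) *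
        (y ^ (2/θ-1) * B (y^(1/θ)) * fX (y^(1/θ)))) (lam * t₀) :=
      laplace_contAt hintB (by positivity)
    have hc2 : ContinuousAt (fun t : ℝ => lam * t) t₀ :=
      (continuous_const.mul continuous_id).continuousAt
    exact continuousAt_const.mul (hc1.comp hc2)
  -- Lh = k on the positive axis
  have hLhk : ∀ t ∈ Ioi (0:ℝ), Lh t = k t := by
    intro t₀ ht₀
    rw [mem_Ioi] at ht₀
    have hu₀pos : 0 < t₀ ^ (1/θ) := Real.rpow_pos_of_pos ht₀ _
    have hz₀ : 1/(t₀ ^ (1/θ)+1) ∈ Ioo (0:ℝ) 1 := by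
      constructor
      · positivity
      · rw [div_lt_one (by positivity)]
        linarith
    obtain ⟨v, hv, hvt⟩ := seq_tendsto_mem hN hz₀
    set w : ℕ → ℝ := fun n => ((1 - v n)/(v n))^θ with hwdef
    have hveq : ∀ n, Lh (w n) = k (w n) := by
      intro n
      obtain ⟨hvmem, hvN⟩ := hv n
      have hfzv := not_not.mp hvN hvmem
      have hun : (0:ℝ) < (1 - v n)/(v n) := div_pos (by linarith [hvmem.2]) hvmem.1
      have hwpos : 0 < w n := Real.rpow_pos_of_pos hun θ
      have h1 := (hLaplace (w n) (mem_Ioi.mpr hwpos)).2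
      have h2 : (w n) ^ (1/θ:ℝ) = (1 - v n)/(v n) := by
        show (((1 - v n)/(v n))^θ) ^ (1/θ:ℝ) = (1 - v n)/(v n)
        rw [← Real.rpow_mul (le_of_lt hun), mul_one_div_cancel (ne_of_gt hθ), Real.rpow_one]
      have hv0 : (0:ℝ) < v n := hvmem.1
      have h3 : 1/((1 - v n)/(v n) + 1) = v n := by
        have h4 : (1 - v n)/(v n) + 1 = 1/(v n) := by
          field_simp
          ring
        rw [h4, one_div_one_div]
      rw [h2, h3, hfzv] at h1
      show (∫ y in Ioi (0:ℝ), Real.exp (-(w n * y)) * h y) = k (w n)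
      have hAn := hA _ (mem_Ioi.mpr hun)
      have hc : A ((1-v n)/(v n)) * ((1-v n)/(v n) + 1)^2 ≠ 0 := by positivity
      rw [h1, one_div, ← mul_assoc, inv_mul_cancel₀ hc, one_mul]
    have hwt : Filter.Tendsto w Filter.atTop (nhds t₀) := by
      have hcont : ContinuousAt (fun z : ℝ => ((1-z)/z)^θ) (1/(t₀^(1/θ)+1)) := by
        apply ContinuousAt.rpow_const
        · exact ContinuousAt.div (continuousAt_const.sub continuousAt_id) continuousAt_id
            (ne_of_gt hz₀.1)
        · exact Or.inr (le_of_lt hθ)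
      have hval : ((1 - 1/(t₀^(1/θ)+1))/(1/(t₀^(1/θ)+1)))^θ = t₀ := by
        have h5 : (1 - 1/(t₀^(1/θ)+1))/(1/(t₀^(1/θ)+1)) = t₀^(1/θ) := by
          rw [div_div_eq_mul_div]
          field_simp
          ring
        rw [h5, ← Real.rpow_mul (le_of_lt ht₀), one_div_mul_cancel (ne_of_gt hθ),
          Real.rpow_one]
      have h6 := hcont.tendsto.comp hvt
      rw [hval] at h6
      exact h6
    have hl1 : Filter.Tendsto (fun n => Lh (w n)) Filter.atTop (nhds (Lh t₀)) :=
      ((hLhc t₀ (mem_Ioi.mpr ht₀)).tendsto).comp hwt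
    have hl2 : Filter.Tendsto (fun n => k (w n)) Filter.atTop (nhds (k t₀)) :=
      ((hkc t₀ (mem_Ioi.mpr ht₀)).tendsto).comp hwt
    rw [funext hveq] at hl1
    exact tendsto_nhds_unique hl1 hl2
  -- the candidate inverse-Laplace function g
  set g : ℝ → ℝ := fun y => (1/(lam*θ)) * ((y/lam) ^ (2/θ-1:ℝ) *
      (B ((y/lam)^(1/θ:ℝ)) * fX ((y/lam)^(1/θ:ℝ)))) with hgdef
  have hcomp : ∀ t : ℝ, ∀ w : ℝ, Real.exp (-(t*(lam*w))) * g (lam*w)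
      = (1/(lam*θ)) * (w ^ (2/θ-1:ℝ) * B (w^(1/θ:ℝ)) * fX (w^(1/θ:ℝ)) *
          Real.exp (-(lam*t*w))) := by
    intro t w
    rw [hgdef]
    simp only
    rw [mul_div_cancel_left₀ _ (ne_of_gt hlam)]
    have harg : -(t*(lam*w)) = -(lam*t*w) := by ring
    rw [harg]
    ring
  have hLg : ∀ t ∈ Ioi (0:ℝ),
      IntegrableOn (fun y => Real.exp (-(t*y)) * g y) (Ioi 0) volume ∧
      (∫ y in Ioi (0:ℝ), Real.exp (-(t*y)) * g y) = k t := by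
    intro t ht
    rw [mem_Ioi] at ht
    have hItt := hInt (lam*t) (mem_Ioi.mpr (by positivity))
    have h1 : IntegrableOn (fun w => Real.exp (-(t*(lam*w))) * g (lam*w)) (Ioi 0) volume := by
      refine (hItt.const_mul (1/(lam*θ))).congr (Filter.Eventually.of_forall fun w => ?_)
      exact (hcomp t w).symm
    constructor
    · have h2 := (integrableOn_Ioi_comp_mul_left_iff
        (fun y => Real.exp (-(t*y)) * g y) 0 hlam).mp h1
      rwa [mul_zero] at h2
    · have h3 := integral_comp_mul_left_Ioi (fun y => Real.exp (-(t*y)) * g y) 0 hlam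
      rw [mul_zero] at h3
      have h5 : (∫ y in Ioi (0:ℝ), Real.exp (-(t*y)) * g y)
          = lam * ∫ w in Ioi (0:ℝ), Real.exp (-(t*(lam*w))) * g (lam*w) := by
        rw [h3, smul_eq_mul, ← mul_assoc, mul_inv_cancel₀ (ne_of_gt hlam), one_mul]
      rw [h5, integral_congr_ae (Filter.Eventually.of_forall fun w => hcomp t w),
        integral_const_mul, hkdef, ← mul_assoc]
      congr 1
      field_simp
  -- continuity of g on the positive axis
  have hmapsto : Set.MapsTo (fun y : ℝ => (y/lam)^(1/θ:ℝ)) (Ioi 0) (Ioi 0) := by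
    intro y hy
    rw [mem_Ioi] at hy ⊢
    exact Real.rpow_pos_of_pos (by positivity) _
  have hφc : ContinuousOn (fun y : ℝ => (y/lam)^(1/θ:ℝ)) (Ioi 0) := by
    apply ContinuousOn.rpow_const (ContinuousOn.div continuousOn_id continuousOn_const
      (fun y hy => ne_of_gt hlam))
    intro y hy
    exact Or.inr (by positivity)
  have hgc : ContinuousOn g (Ioi 0) := by
    rw [hgdef]
    apply ContinuousOn.mul continuousOn_const
    apply ContinuousOn.mul
    · apply ContinuousOn.rpow_const (ContinuousOn.div continuousOn_id continuousOn_const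
        (fun y hy => ne_of_gt hlam))
      intro y hy
      rw [mem_Ioi] at hy
      exact Or.inl (ne_of_gt (div_pos hy hlam))
    · exact (hBc.comp hφc hmapsto).mul (hfXc.comp hφc hmapsto)
  -- apply uniqueness of the Laplace transform
  have hDc : ContinuousOn (fun y => h y - g y) (Ioi 0) := hhc.sub hgc
  have hDint : ∀ t ∈ Ioi (0:ℝ),
      IntegrableOn (fun y => Real.exp (-(t*y)) * (h y - g y)) (Ioi 0) volume := by
    intro t ht
    refine (((hLaplace t ht).1.sub (hLg t ht).1).congr
      (Filter.Eventually.of_forall fun y => ?_))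
    show Real.exp (-(t*y)) * h y - Real.exp (-(t*y)) * g y
      = Real.exp (-(t*y)) * (h y - g y)
    ring
  have hDzero : ∀ t ∈ Ioi (0:ℝ),
      (∫ y in Ioi (0:ℝ), Real.exp (-(t*y)) * (h y - g y)) = 0 := by
    intro t ht
    have hrw : ∀ y : ℝ, Real.exp (-(t*y)) * (h y - g y)
        = Real.exp (-(t*y)) * h y - Real.exp (-(t*y)) * g y := fun y => by ring
    rw [integral_congr_ae (Filter.Eventually.of_forall hrw),
      integral_sub (hLaplace t ht).1 (hLg t ht).1, (hLg t ht).2]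
    have := hLhk t ht
    rw [hLhdef] at this
    simp only at this
    rw [this, sub_self]
  have hfinal := laplace_uniq hDc hDint hDzero
  -- conclusion
  intro x hx
  rw [mem_Ioi] at hx
  have hy : lam * x^θ ∈ Ioi (0:ℝ) := mem_Ioi.mpr (by positivity)
  have h1 := hfinal _ hy
  have h2 : h (lam*x^θ) = g (lam*x^θ) := by linarith
  have h3 : (lam*x^θ)/lam = x^θ := by
    rw [mul_div_cancel_left₀ _ (ne_of_gt hlam)]
  have h4 : ((x:ℝ)^θ)^(1/θ:ℝ) = x := by
    rw [← Real.rpow_mul (le_of_lt hx), mul_one_div_cancel (ne_of_gt hθ), Real.rpow_one]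
  have h5 : ((x:ℝ)^θ)^(2/θ-1:ℝ) = x^(2-θ:ℝ) := by
    rw [← Real.rpow_mul (le_of_lt hx)]
    congr 1
    field_simp
    try ring
  rw [h2, hgdef]
  simp only
  rw [h3, h4, h5]
  have hBx := hB x (mem_Ioi.mpr hx)
  have hxp : (0:ℝ) < x^(2-θ:ℝ) := Real.rpow_pos_of_pos hx _
  field_simp
  try ring
end

section
/- Let p > 0, let g : (0,∞) → [0,∞) be measurable, and let y > 0 be such that ∫_0^∞ g(x) * (x+y)^{-p} dx < ∞. Then ∫_0^∞ g(x) * (x+y)^{-p} dx = (1/Γ(p)) * ∫_0^∞ t^{p-1} * exp(-y*t) * (∫_0^∞ exp(-t*x) * g(x) dx) dt; that is, the generalized Stieltjes transform of order p of g equals the iterated Laplace transform of g weighted by t^{p-1}/Γ(p). -/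
open MeasureTheory Real Set
open scoped ENNReal

theorem stieltjes_as_double_laplace
    (p : ℝ) (hp : 0 < p) (g : ℝ → ℝ) (hgm : Measurable g) (hg0 : ∀ x, 0 ≤ g x)
    (y : ℝ) (hy : 0 < y)
    (hint : IntegrableOn (fun x => g x * (x + y) ^ (-p)) (Ioi 0) volume) :
    ∫ x in Ioi (0:ℝ), g x * (x + y) ^ (-p) =
      (1 / Real.Gamma p) *
        ∫ t in Ioi (0:ℝ), t ^ (p - 1) * Real.exp (-(y * t)) *
          ∫ x in Ioi (0:ℝ), Real.exp (-(t * x)) * g x := by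
  have hΓ : 0 < Real.Gamma p := Real.Gamma_pos_of_pos hp
  set A : ℝ≥0∞ := ∫⁻ x in Ioi (0:ℝ), ENNReal.ofReal (g x * (x + y) ^ (-p)) with hA
  set J : ℝ → ℝ≥0∞ := fun t => ∫⁻ x in Ioi (0:ℝ), ENNReal.ofReal (Real.exp (-(t * x)) * g x)
    with hJ
  set w : ℝ → ℝ := fun t => t ^ (p - 1) * Real.exp (-(y * t)) with hw
  have hnonnegLHS : 0 ≤ᵐ[volume.restrict (Ioi (0:ℝ))] fun x => g x * (x + y) ^ (-p) := by
    filter_upwards [ae_restrict_mem measurableSet_Ioi] with x hx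
    exact mul_nonneg (hg0 x) (Real.rpow_nonneg (by linarith [mem_Ioi.mp hx]) _)
  have hAval : ENNReal.ofReal (∫ x in Ioi (0:ℝ), g x * (x + y) ^ (-p)) = A :=
    ofReal_integral_eq_lintegral_ofReal hint hnonnegLHS
  have hAfin : A ≠ ⊤ := by rw [← hAval]; exact ENNReal.ofReal_ne_top
  -- key Gamma identity as lintegral
  have key : ∀ x : ℝ, 0 < x →
      (∫⁻ t in Ioi (0:ℝ), ENNReal.ofReal (t ^ (p - 1) * Real.exp (-((x + y) * t)))) =
        ENNReal.ofReal ((x + y) ^ (-p) * Real.Gamma p) := by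
    intro x hx
    have hxy : 0 < x + y := by linarith
    have hInt : IntegrableOn (fun t => t ^ (p - 1) * Real.exp (-((x + y) * t)))
        (Ioi (0:ℝ)) volume := by
      have h2 : (fun t : ℝ => t ^ (p - 1) * Real.exp (-((x + y) * t))) =
          fun t : ℝ => t ^ (p - 1) * Real.exp (-(x + y) * t ^ (1:ℝ)) := by
        funext t; rw [Real.rpow_one, neg_mul]
      rw [h2]
      exact integrableOn_rpow_mul_exp_neg_mul_rpow (by linarith) zero_lt_one hxy
    rw [← ofReal_integral_eq_lintegral_ofReal hInt ?_]
    · rw [Real.integral_rpow_mul_exp_neg_mul_Ioi hp hxy, one_div,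
        Real.inv_rpow hxy.le, ← Real.rpow_neg hxy.le]
    · filter_upwards [ae_restrict_mem measurableSet_Ioi] with t ht
      exact mul_nonneg (Real.rpow_nonneg (le_of_lt (mem_Ioi.mp ht)) _) (Real.exp_pos _).le
  -- the double lintegral identity
  have step1 : A * ENNReal.ofReal (Real.Gamma p) =
      ∫⁻ x in Ioi (0:ℝ), ∫⁻ t in Ioi (0:ℝ),
        ENNReal.ofReal (g x) * (ENNReal.ofReal (w t) * ENNReal.ofReal (Real.exp (-(t * x)))) := by
    rw [hA, ← lintegral_mul_const' _ _ (by simp)]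
    refine setLIntegral_congr_fun measurableSet_Ioi (fun x hx => ?_)
    have hx : 0 < x := mem_Ioi.mp hx
    rw [ENNReal.ofReal_mul (hg0 x), mul_assoc, ← ENNReal.ofReal_mul
      (Real.rpow_nonneg (by linarith) _), ← key x hx, ← lintegral_const_mul' _ _ (by simp)]
    refine setLIntegral_congr_fun measurableSet_Ioi (fun t ht => ?_)
    have ht : 0 < t := mem_Ioi.mp ht
    have : Real.exp (-((x + y) * t)) = Real.exp (-(y * t)) * Real.exp (-(t * x)) := by
      rw [← Real.exp_add]; ring_nf
    rw [this, ← mul_assoc (t ^ (p-1)), ENNReal.ofReal_mul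
      (mul_nonneg (Real.rpow_nonneg ht.le _) (Real.exp_pos _).le)]
  have hmeasF : AEMeasurable (Function.uncurry fun x t =>
      ENNReal.ofReal (g x) * (ENNReal.ofReal (w t) * ENNReal.ofReal (Real.exp (-(t * x)))))
      ((volume.restrict (Ioi (0:ℝ))).prod (volume.restrict (Ioi (0:ℝ)))) := by
    apply Measurable.aemeasurable
    refine Measurable.mul (f := fun q : ℝ × ℝ => ENNReal.ofReal (g q.1))
      (g := fun q : ℝ × ℝ => ENNReal.ofReal (w q.2) * ENNReal.ofReal (Real.exp (-(q.2 * q.1)))) ?_ ?_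
    · exact (ENNReal.measurable_ofReal.comp (hgm.comp measurable_fst))
    · refine Measurable.mul (f := fun q : ℝ × ℝ => ENNReal.ofReal (w q.2))
        (g := fun q : ℝ × ℝ => ENNReal.ofReal (Real.exp (-(q.2 * q.1)))) ?_ ?_
      · refine ENNReal.measurable_ofReal.comp ?_
        exact ((measurable_snd.pow_const _).mul
          ((measurable_snd.const_mul y).neg.exp)).comp measurable_id |>.mono le_rfl le_rfl
      · exact ENNReal.measurable_ofReal.comp
          (((measurable_snd.mul measurable_fst).neg).exp)
  have step2 : A * ENNReal.ofReal (Real.Gamma p) =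
      ∫⁻ t in Ioi (0:ℝ), ENNReal.ofReal (w t) * J t := by
    rw [step1, lintegral_lintegral_swap hmeasF]
    refine setLIntegral_congr_fun measurableSet_Ioi (fun t ht => ?_)
    rw [hJ]
    rw [← lintegral_const_mul' _ _ (by simp)]
    refine setLIntegral_congr_fun measurableSet_Ioi (fun x hx => ?_)
    rw [ENNReal.ofReal_mul (Real.exp_pos _).le]
    ring
  have hBfin : (∫⁻ t in Ioi (0:ℝ), ENNReal.ofReal (w t) * J t) ≠ ⊤ := by
    rw [← step2]
    exact ENNReal.mul_ne_top hAfin ENNReal.ofReal_ne_top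
  have hJmeas : Measurable J := by
    apply Measurable.lintegral_prod_right'
      (f := fun q : ℝ × ℝ => ENNReal.ofReal (Real.exp (-(q.1 * q.2)) * g q.2))
    exact ENNReal.measurable_ofReal.comp
      (((measurable_fst.mul measurable_snd).neg.exp).mul (hgm.comp measurable_snd))
  have hwmeas : Measurable w := by
    exact (measurable_id.pow_const _).mul ((measurable_id.const_mul y).neg.exp)
  have hJfin : ∀ᵐ t ∂(volume.restrict (Ioi (0:ℝ))), t ∈ Ioi (0:ℝ) → J t ≠ ⊤ := by
    have h1 : ∀ᵐ t ∂(volume.restrict (Ioi (0:ℝ))), ENNReal.ofReal (w t) * J t ≠ ⊤ :=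
      ae_lt_top ((ENNReal.measurable_ofReal.comp hwmeas).mul hJmeas) hBfin |>.mono
        fun t ht => ht.ne
    filter_upwards [h1] with t ht htpos
    intro hJt
    apply ht
    rw [hJt, ENNReal.mul_top]
    simp only [ne_eq, ENNReal.ofReal_eq_zero, not_le, hw]
    exact mul_pos (Real.rpow_pos_of_pos htpos _) (Real.exp_pos _)
  -- identify the RHS Bochner integral
  have hInnerEq : ∀ t : ℝ, (∫ x in Ioi (0:ℝ), Real.exp (-(t * x)) * g x) = (J t).toReal := by
    intro t
    rw [hJ]
    exact integral_eq_lintegral_of_nonneg_ae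
      (ae_of_all _ fun x => mul_nonneg (Real.exp_pos _).le (hg0 x))
      (Measurable.aestronglyMeasurable (by
        exact (((measurable_const.mul measurable_id').neg).exp).mul hgm))
  have hfm : AEStronglyMeasurable
      (fun t => w t * ∫ x in Ioi (0:ℝ), Real.exp (-(t * x)) * g x)
      (volume.restrict (Ioi (0:ℝ))) := by
    apply AEStronglyMeasurable.mul hwmeas.aestronglyMeasurable
    have : StronglyMeasurable fun q : ℝ × ℝ => Real.exp (-(q.1 * q.2)) * g q.2 :=
      (((measurable_fst.mul measurable_snd).neg.exp).mul (hgm.comp measurable_snd)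
        ).stronglyMeasurable
    exact (this.integral_prod_right').aestronglyMeasurable
  have hRHS : (∫ t in Ioi (0:ℝ), w t * ∫ x in Ioi (0:ℝ), Real.exp (-(t * x)) * g x) =
      (∫⁻ t in Ioi (0:ℝ), ENNReal.ofReal (w t) * J t).toReal := by
    rw [integral_eq_lintegral_of_nonneg_ae ?_ hfm]
    · congr 1
      refine lintegral_congr_ae ?_
      filter_upwards [ae_restrict_mem measurableSet_Ioi, hJfin] with t ht hJt
      have hwt : 0 ≤ w t :=
        mul_nonneg (Real.rpow_nonneg (le_of_lt (mem_Ioi.mp ht)) _) (Real.exp_pos _).le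
      rw [ENNReal.ofReal_mul hwt, hInnerEq t, ENNReal.ofReal_toReal (hJt ht)]
    · filter_upwards [ae_restrict_mem measurableSet_Ioi] with t ht
      have hwt : 0 ≤ w t :=
        mul_nonneg (Real.rpow_nonneg (le_of_lt (mem_Ioi.mp ht)) _) (Real.exp_pos _).le
      exact mul_nonneg hwt (integral_nonneg fun x => mul_nonneg (Real.exp_pos _).le (hg0 x))
    -- done
  have hLHS : (∫ x in Ioi (0:ℝ), g x * (x + y) ^ (-p)) = A.toReal := by
    rw [← hAval, ENNReal.toReal_ofReal (integral_nonneg_of_ae hnonnegLHS)]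
  have hfinal : (∫⁻ t in Ioi (0:ℝ), ENNReal.ofReal (w t) * J t).toReal =
      A.toReal * Real.Gamma p := by
    rw [← step2, ENNReal.toReal_mul, ENNReal.toReal_ofReal hΓ.le]
  rw [hLHS]
  calc A.toReal = (1 / Real.Gamma p) * (A.toReal * Real.Gamma p) := by field_simp
    _ = (1 / Real.Gamma p) * ∫ t in Ioi (0:ℝ), w t *
          ∫ x in Ioi (0:ℝ), Real.exp (-(t * x)) * g x := by rw [hRHS, hfinal]
end

section
/- Let a > 0, λ > 0 and let b be a positive integer. Let X and Y be independent random variables on a probability space, each almost surely positive, where X has Lebesgue density f_X(x) = a*b * Σ_{k=0}^{b-1} C(b-1,k) * (-1)^k * λ^{a*(k+1)} * x^{a*(k+1)-1} * exp(-λ*x) / Γ(a*(k+1)+1) for x > 0, and Y has the exponential density f_Y(y) = λ * exp(-λ*y) for y > 0. Then Z = X/(X+Y) has the Kumaraswamy(a,b) density f_Z(z) = a*b * z^{a-1} * (1 - z^a)^{b-1} for z ∈ (0,1). -/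
open MeasureTheory ProbabilityTheory Real Set

lemma kum_sum (b : ℕ) (u : ℝ) :
    ∑ k ∈ Finset.range b, ((b.choose (k+1)):ℝ) * (-1:ℝ)^k * u^(k+1) = 1 - (1-u)^b := by
  have h : (1 - u)^b = ((-u) + 1)^b := by ring_nf
  rw [h, add_pow, Finset.sum_range_succ']
  simp only [Nat.choose_zero_right, pow_zero, one_pow, Nat.cast_one, mul_one, one_mul,
    Nat.sub_zero]
  have : ∀ k ∈ Finset.range b, ((b.choose (k+1)):ℝ) * (-1:ℝ)^k * u^(k+1)
      = -((-u)^(k+1) * (b.choose (k+1) : ℝ)) := by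
    intro k _
    rw [neg_pow, pow_succ]
    ring
  rw [Finset.sum_congr rfl this, Finset.sum_neg_distrib]
  ring

lemma int_base {α r : ℝ} (hα : 0 < α) (hr : 0 < r) :
    IntegrableOn (fun x : ℝ => x ^ (α-1) * Real.exp (-(r*x))) (Ioi 0) := by
  have h := integrableOn_rpow_mul_exp_neg_mul_rpow (by linarith : (-1:ℝ) < α-1) zero_lt_one hr
  simpa only [Real.rpow_one, neg_mul] using h

lemma exp_tail {lam : ℝ} (hlam : 0 < lam) (w : ℝ) :
    ∫ y in Ioi w, lam * Real.exp (-(lam*y)) = Real.exp (-(lam*w)) := by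
  have hderiv : ∀ y ∈ Ici w, HasDerivAt (fun y => -Real.exp (-(lam*y)))
      (lam * Real.exp (-(lam*y))) y := by
    intro y _
    have h1 : HasDerivAt (fun y : ℝ => -(lam*y)) (-lam) y := by
      have h := ((hasDerivAt_id y).const_mul lam).neg; rw [mul_one] at h; exact h
    have : HasDerivAt (fun y => -Real.exp (-(lam*y))) (-(Real.exp (-(lam*y)) * -lam)) y :=
      (h1.exp).neg
    convert this using 1
    ring
  have hint : IntegrableOn (fun y => lam * Real.exp (-(lam*y))) (Ioi w) := by
    apply Integrable.const_mul
    have := exp_neg_integrableOn_Ioi w hlam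
    simpa only [neg_mul, IntegrableOn] using this
  have htend : Filter.Tendsto (fun y => -Real.exp (-(lam*y))) Filter.atTop (nhds 0) := by
    rw [show (0:ℝ) = -0 by ring]
    apply Filter.Tendsto.neg
    apply Real.tendsto_exp_atBot.comp
    apply Filter.tendsto_neg_atBot_iff.mpr
    exact Filter.Tendsto.const_mul_atTop hlam Filter.tendsto_id
  have := integral_Ioi_of_hasDerivAt_of_tendsto' hderiv hint htend
  rw [this]; ring

noncomputable def kd (a lam : ℝ) (b : ℕ) (x : ℝ) : ℝ :=
  a * b * ∑ k ∈ Finset.range b, ((b - 1).choose k : ℝ) * (-1 : ℝ) ^ k *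
    lam ^ (a * ((k : ℝ) + 1)) * x ^ (a * ((k : ℝ) + 1) - 1) *
      Real.exp (-(lam * x)) / Real.Gamma (a * ((k : ℝ) + 1) + 1)

lemma kd_measurable (a lam : ℝ) (b : ℕ) : Measurable (kd a lam b) := by
  unfold kd
  apply Measurable.const_mul
  apply Finset.measurable_sum
  intro k _
  apply Measurable.div_const
  apply Measurable.mul
  · exact ((by measurability : Measurable fun x : ℝ => x ^ (a * ((k : ℝ) + 1) - 1))).const_mul _
  · exact (measurable_id'.const_mul lam).neg.exp

lemma kd_pointwise (a lam : ℝ) (b : ℕ) (s : ℝ) (x : ℝ) :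
    kd a lam b x * Real.exp (-(s*x)) = ∑ k ∈ Finset.range b,
      (a * b * ((b - 1).choose k : ℝ) * (-1 : ℝ) ^ k * lam ^ (a * ((k : ℝ) + 1))
        / Real.Gamma (a * ((k : ℝ) + 1) + 1)) *
      (x ^ (a * ((k : ℝ) + 1) - 1) * Real.exp (-((lam+s) * x))) := by
  unfold kd
  rw [Finset.mul_sum, Finset.sum_mul]
  apply Finset.sum_congr rfl
  intro k _
  rw [show -((lam+s)*x) = -(lam*x) + -(s*x) by ring, Real.exp_add]
  ring

lemma kd_integrableOn (a lam : ℝ) (ha : 0 < a) (hlam : 0 < lam) (b : ℕ) {s : ℝ} (hs : 0 ≤ s) :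
    IntegrableOn (fun x => kd a lam b x * Real.exp (-(s*x))) (Ioi 0) := by
  simp_rw [kd_pointwise]
  apply integrable_finset_sum
  intro k _
  apply Integrable.const_mul
  exact int_base (by positivity) (by linarith)

lemma kd_integral (a lam : ℝ) (ha : 0 < a) (hlam : 0 < lam) (b : ℕ) (hb : 0 < b)
    {s : ℝ} (hs : 0 ≤ s) :
    ∫ x in Ioi 0, kd a lam b x * Real.exp (-(s*x)) =
      1 - (1 - (lam/(lam+s)) ^ a) ^ b := by
  have hls : 0 < lam + s := by linarith
  simp_rw [kd_pointwise]
  rw [integral_finset_sum _ (fun k _ => (Integrable.const_mul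
    (int_base (by positivity) hls) _))]
  have hterm : ∀ k ∈ Finset.range b,
      (a * b * ((b - 1).choose k : ℝ) * (-1 : ℝ) ^ k * lam ^ (a * ((k : ℝ) + 1))
        / Real.Gamma (a * ((k : ℝ) + 1) + 1)) *
      ∫ x in Ioi 0, x ^ (a * ((k : ℝ) + 1) - 1) * Real.exp (-((lam+s) * x)) =
      ((b.choose (k+1)):ℝ) * (-1:ℝ)^k * ((lam/(lam+s))^a)^(k+1) := by
    intro k _
    rw [Real.integral_rpow_mul_exp_neg_mul_Ioi (by positivity) hls]
    have hα : (0:ℝ) < a * ((k:ℝ)+1) := by positivity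
    rw [Real.Gamma_add_one hα.ne']
    have hθ : lam ^ (a * ((k : ℝ) + 1)) * (1/(lam+s)) ^ (a * ((k : ℝ) + 1))
        = (lam/(lam+s)) ^ (a * ((k : ℝ) + 1)) := by
      rw [← Real.mul_rpow hlam.le (by positivity)]
      ring_nf
    have hpow : (lam/(lam+s)) ^ (a * ((k : ℝ) + 1)) = ((lam/(lam+s))^a)^(k+1) := by
      rw [Real.rpow_mul (by positivity), show ((k:ℝ)+1) = ((k+1 : ℕ):ℝ) by push_cast; ring,
        Real.rpow_natCast]
    have hchoose : (b:ℝ) * ((b - 1).choose k : ℝ) = ((b.choose (k+1)):ℝ) * ((k:ℝ)+1) := by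
      have := Nat.add_one_mul_choose_eq (b-1) k
      rw [Nat.sub_add_cancel hb] at this
      exact_mod_cast congrArg (Nat.cast : ℕ → ℝ) this
    have hΓ : (0:ℝ) < Real.Gamma (a * ((k:ℝ)+1)) := Real.Gamma_pos_of_pos hα
    have key : lam ^ (a * ((k : ℝ) + 1)) * (1/(lam+s)) ^ (a * ((k : ℝ) + 1))
        = ((lam/(lam+s))^a)^(k+1) := hθ.trans hpow
    rw [div_mul_eq_mul_div, div_eq_iff (by positivity)]
    linear_combination (a * (-1:ℝ)^k * Real.Gamma (a*((k:ℝ)+1)) *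
        (lam ^ (a * ((k : ℝ) + 1)) * (1/(lam+s)) ^ (a * ((k : ℝ) + 1)))) * hchoose +
      (a * (-1:ℝ)^k * Real.Gamma (a*((k:ℝ)+1)) * ((b.choose (k+1)):ℝ) * ((k:ℝ)+1)) * key
  simp_rw [MeasureTheory.integral_const_mul]
  rw [Finset.sum_congr rfl hterm, kum_sum]

lemma tailY {lam : ℝ} (hlam : 0 < lam) {w : ℝ} (hw : 0 < w) :
    ((volume.restrict (Ioi 0)).withDensity
        (fun y => ENNReal.ofReal (lam * Real.exp (-(lam * y))))) (Ici w)
      = ENNReal.ofReal (Real.exp (-(lam * w))) := by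
  rw [withDensity_apply _ measurableSet_Ici, Measure.restrict_restrict measurableSet_Ici]
  have hss : Ici w ∩ Ioi 0 = Ici w := inter_eq_left.mpr fun y hy => lt_of_lt_of_le hw hy
  rw [hss]
  rw [← ofReal_integral_eq_lintegral_ofReal]
  · rw [MeasureTheory.integral_Ici_eq_integral_Ioi, exp_tail hlam w]
  · have : IntegrableOn (fun y => lam * Real.exp (-(lam*y))) (Ici w) := by
      rw [integrableOn_Ici_iff_integrableOn_Ioi]
      apply Integrable.const_mul
      simpa only [neg_mul, IntegrableOn] using exp_neg_integrableOn_Ioi w hlam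
    exact this
  · exact Filter.Eventually.of_forall fun y => by positivity

lemma ae_nonneg_of_integral {μ : Measure ℝ} {f : ℝ → ℝ} (hf : Integrable f μ)
    (h0 : 0 ≤ ∫ x, f x ∂μ)
    (h1 : ∫⁻ x, ENNReal.ofReal (f x) ∂μ = ENNReal.ofReal (∫ x, f x ∂μ)) :
    0 ≤ᵐ[μ] f := by
  set p := fun x => max (f x) 0 with hp
  have hpint : Integrable p μ := hf.pos_part
  have hofr : ∀ x, ENNReal.ofReal (f x) = ENNReal.ofReal (p x) := by
    intro x
    rcases le_total 0 (f x) with h | h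
    · simp [hp, max_eq_left h]
    · simp [hp, max_eq_right h, ENNReal.ofReal_eq_zero.mpr h]
  have h2 : ENNReal.ofReal (∫ x, p x ∂μ) = ENNReal.ofReal (∫ x, f x ∂μ) := by
    rw [ofReal_integral_eq_lintegral_ofReal hpint
      (Filter.Eventually.of_forall fun x => le_max_right _ _), ← h1]
    exact lintegral_congr fun x => (hofr x).symm
  have h3 : ∫ x, p x ∂μ = ∫ x, f x ∂μ := by
    have hpnn : 0 ≤ ∫ x, p x ∂μ := integral_nonneg fun x => le_max_right _ _
    rwa [ENNReal.ofReal_eq_ofReal_iff hpnn h0] at h2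
  have h4 : ∫ x, (p x - f x) ∂μ = 0 := by rw [integral_sub hpint hf, h3, sub_self]
  have h5 : (fun x => p x - f x) =ᵐ[μ] 0 :=
    (integral_eq_zero_iff_of_nonneg (fun x => sub_nonneg.mpr (le_max_left _ _))
      (hpint.sub hf)).mp h4
  filter_upwards [h5] with x hx
  have hx' : p x - f x = 0 := hx
  have : f x = p x := by linarith
  rw [this]
  exact le_max_right _ _

lemma kum_integrableOn (a : ℝ) (ha : 0 < a) (b : ℕ) {t : ℝ} (ht0 : 0 < t) (ht1 : t < 1) :
    IntegrableOn (fun z => a * b * z ^ (a-1) * (1 - z^a)^(b-1)) (Ioc 0 t) := by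
  have hbase : IntegrableOn (fun z : ℝ => a * b * z^(a-1)) (Ioc 0 t) := by
    apply Integrable.const_mul
    exact (intervalIntegrable_iff_integrableOn_Ioc_of_le ht0.le).mp
      (intervalIntegral.intervalIntegrable_rpow' (by linarith))
  apply Integrable.mono' hbase
  · apply Measurable.aestronglyMeasurable
    measurability
  · rw [ae_restrict_iff' measurableSet_Ioc]
    apply Filter.Eventually.of_forall
    rintro z ⟨hz0, hzt⟩
    have hza : 0 ≤ z ^ a := Real.rpow_nonneg hz0.le a
    have hza1 : z ^ a ≤ 1 := Real.rpow_le_one hz0.le (by linarith) ha.le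
    have h1 : |1 - z^a| ≤ 1 := by rw [abs_le]; constructor <;> linarith
    have h2 : |(1 - z^a)^(b-1)| ≤ 1 := by
      rw [abs_pow]; exact pow_le_one₀ (abs_nonneg _) h1
    rw [Real.norm_eq_abs, abs_mul]
    have hz1 : 0 ≤ a * b * z^(a-1) := by positivity
    calc |a * ↑b * z ^ (a-1)| * |(1 - z^a)^(b-1)| ≤ |a * ↑b * z ^ (a-1)| * 1 := by
          exact mul_le_mul_of_nonneg_left h2 (abs_nonneg _)
      _ = a * ↑b * z^(a-1) := by rw [mul_one, abs_of_nonneg hz1]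

lemma kum_integral (a : ℝ) (ha : 0 < a) (b : ℕ) (hb : 0 < b) {t : ℝ}
    (ht0 : 0 < t) (ht1 : t < 1) :
    ∫ z in Ioc 0 t, a * b * z ^ (a-1) * (1 - z^a)^(b-1) = 1 - (1 - t^a)^b := by
  rw [← intervalIntegral.integral_of_le ht0.le]
  have hcont : ContinuousOn (fun z : ℝ => -(1-z^a)^b) (Icc 0 t) := by
    have h1 : ContinuousOn (fun z : ℝ => z ^ a) (Icc 0 t) := fun z _ =>
      (Real.continuousAt_rpow_const z a (Or.inr ha.le)).continuousWithinAt
    exact ((continuousOn_const.sub h1).pow b).neg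
  have hderiv : ∀ z ∈ Ioo 0 t, HasDerivWithinAt (fun z : ℝ => -(1-z^a)^b)
      (a * b * z ^ (a-1) * (1 - z^a)^(b-1)) (Ioi z) z := by
    rintro z ⟨hz0, _⟩
    have h1 : HasDerivAt (fun z : ℝ => z ^ a) (a * z^(a-1)) z :=
      Real.hasDerivAt_rpow_const (Or.inl hz0.ne')
    have h2 : HasDerivAt (fun z : ℝ => 1 - z ^ a) (-(a * z^(a-1))) z := h1.const_sub 1
    have h3 := (h2.pow b).neg
    have : -(↑b * (1 - z ^ a) ^ (b - 1) * -(a * z ^ (a - 1)))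
        = a * b * z ^ (a-1) * (1 - z^a)^(b-1) := by ring
    rw [this] at h3
    exact h3.hasDerivWithinAt
  have hii : IntervalIntegrable (fun z => a * b * z ^ (a-1) * (1 - z^a)^(b-1)) volume 0 t :=
    (intervalIntegrable_iff_integrableOn_Ioc_of_le ht0.le).mpr (kum_integrableOn a ha b ht0 ht1)
  rw [intervalIntegral.integral_eq_sub_of_hasDeriv_right_of_le ht0.le hcont hderiv hii]
  rw [Real.zero_rpow ha.ne']
  simp only [sub_zero, one_pow]
  ring

lemma nu_val (a : ℝ) (ha : 0 < a) (b : ℕ) (hb : 0 < b) {t : ℝ} (ht0 : 0 < t) (ht1 : t < 1)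
    {s : Set ℝ} (hs : MeasurableSet s) (hinter : s ∩ Ioo 0 1 = Ioc 0 t) :
    ((volume.restrict (Ioo 0 1)).withDensity
      (fun z => ENNReal.ofReal (a * b * z ^ (a - 1) * (1 - z ^ a) ^ (b - 1)))) s
    = ENNReal.ofReal (1 - (1 - t^a)^b) := by
  rw [withDensity_apply _ hs, Measure.restrict_restrict hs, hinter]
  rw [← ofReal_integral_eq_lintegral_ofReal (kum_integrableOn a ha b ht0 ht1)]
  · rw [kum_integral a ha b hb ht0 ht1]
  · rw [Filter.EventuallyLE, ae_restrict_iff' measurableSet_Ioc]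
    apply Filter.Eventually.of_forall
    rintro z ⟨hz0, hzt⟩
    have hza1 : z ^ a ≤ 1 := Real.rpow_le_one hz0.le (by linarith) ha.le
    have : (0:ℝ) ≤ 1 - z ^ a := by linarith
    positivity

theorem kumaraswamy_ratio
    {Ω : Type*} [MeasurableSpace Ω] (P : Measure Ω) [IsProbabilityMeasure P]
    (a lam : ℝ) (ha : 0 < a) (hlam : 0 < lam) (b : ℕ) (hb : 0 < b)
    (X Y : Ω → ℝ) (hXm : Measurable X) (hYm : Measurable Y)
    (hindep : IndepFun X Y P)
    (hXpos : ∀ᵐ ω ∂P, 0 < X ω) (hYpos : ∀ᵐ ω ∂P, 0 < Y ω)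
    (fX : ℝ → ℝ)
    (hfX : ∀ x ∈ Ioi (0:ℝ), fX x =
      a * b * ∑ k ∈ Finset.range b, ((b - 1).choose k : ℝ) * (-1 : ℝ) ^ k *
        lam ^ (a * ((k : ℝ) + 1)) * x ^ (a * ((k : ℝ) + 1) - 1) *
          Real.exp (-(lam * x)) / Real.Gamma (a * ((k : ℝ) + 1) + 1))
    (hX : P.map X = (volume.restrict (Ioi 0)).withDensity
      (fun x => ENNReal.ofReal (fX x)))
    (hY : P.map Y = (volume.restrict (Ioi 0)).withDensity
      (fun y => ENNReal.ofReal (lam * Real.exp (-(lam * y))))) :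
    P.map (fun ω => X ω / (X ω + Y ω)) = (volume.restrict (Ioo 0 1)).withDensity
      (fun z => ENNReal.ofReal (a * b * z ^ (a - 1) * (1 - z ^ a) ^ (b - 1))) := by
  have hZm : Measurable fun ω => X ω / (X ω + Y ω) := hXm.div (hXm.add hYm)
  haveI : IsProbabilityMeasure (P.map (fun ω => X ω / (X ω + Y ω))) :=
    Measure.isProbabilityMeasure_map hZm.aemeasurable
  set ν : Measure ℝ := (volume.restrict (Ioo 0 1)).withDensity
      (fun z => ENNReal.ofReal (a * b * z ^ (a - 1) * (1 - z ^ a) ^ (b - 1))) with hν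
  -- the density of X is `kd a lam b`
  have hXd : P.map X = (volume.restrict (Ioi 0)).withDensity
      (fun x => ENNReal.ofReal (kd a lam b x)) := by
    rw [hX]
    apply withDensity_congr_ae
    filter_upwards [ae_restrict_mem measurableSet_Ioi] with x hx
    rw [hfX x hx]; rfl
  -- the density of X is a.e. nonnegative
  have hnn : 0 ≤ᵐ[volume.restrict (Ioi 0)] kd a lam b := by
    have hI : IntegrableOn (kd a lam b) (Ioi 0) := by
      have := kd_integrableOn a lam ha hlam b le_rfl
      simpa using this
    have hI1 : ∫ x in Ioi 0, kd a lam b x = 1 := by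
      have := kd_integral a lam ha hlam b hb le_rfl
      simpa [div_self hlam.ne', Real.one_rpow, zero_pow hb.ne'] using this
    apply ae_nonneg_of_integral hI
    · rw [hI1]; norm_num
    · rw [hI1, ENNReal.ofReal_one]
      haveI : IsProbabilityMeasure (P.map X) := Measure.isProbabilityMeasure_map hXm.aemeasurable
      have huniv : ((volume.restrict (Ioi 0)).withDensity
          (fun x => ENNReal.ofReal (kd a lam b x))) univ = 1 := by
        rw [← hXd]; exact measure_univ
      rwa [withDensity_apply _ MeasurableSet.univ, Measure.restrict_univ] at huniv
  haveI : IsProbabilityMeasure ((volume.restrict (Ioi 0)).withDensity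
      (fun y => ENNReal.ofReal (lam * Real.exp (-(lam * y))))) := by
    rw [← hY]; exact Measure.isProbabilityMeasure_map hYm.aemeasurable
  -- the CDF of Z on (0,1)
  have hlhs : ∀ t : ℝ, 0 < t → t < 1 →
      (P.map (fun ω => X ω / (X ω + Y ω))) (Iic t)
        = ENNReal.ofReal (1 - (1 - t^a)^b) := by
    intro t ht0 ht1
    have hs0 : (0:ℝ) ≤ lam * ((1-t)/t) := mul_nonneg hlam.le (div_nonneg (by linarith) ht0.le)
    rw [Measure.map_apply hZm measurableSet_Iic]
    set S : Set (ℝ×ℝ) := {p | 0 < p.1} ∩ ({p | 0 < p.2} ∩ {p | (1-t)/t * p.1 ≤ p.2})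
      with hSdef
    have hS : MeasurableSet S :=
      (measurableSet_lt measurable_const measurable_fst).inter
        ((measurableSet_lt measurable_const measurable_snd).inter
          (measurableSet_le (measurable_fst.const_mul _) measurable_snd))
    have hae : (fun ω => X ω / (X ω + Y ω)) ⁻¹' (Iic t)
        =ᵐ[P] (fun ω => (X ω, Y ω)) ⁻¹' S := by
      rw [Filter.eventuallyEq_set]
      filter_upwards [hXpos, hYpos] with ω hx hy
      simp only [mem_preimage, mem_Iic, hSdef, mem_inter_iff, mem_setOf_eq]
      have hxy : 0 < X ω + Y ω := by linarith
      rw [div_le_iff₀ hxy]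
      constructor
      · intro h
        refine ⟨hx, hy, ?_⟩
        rw [div_mul_eq_mul_div, div_le_iff₀ ht0]
        nlinarith
      · rintro ⟨-, -, h⟩
        rw [div_mul_eq_mul_div, div_le_iff₀ ht0] at h
        nlinarith
    rw [measure_congr hae, ← Measure.map_apply (hXm.prodMk hYm) hS,
      (indepFun_iff_map_prod_eq_prod_map_map hXm.aemeasurable hYm.aemeasurable).mp hindep,
      hXd, hY, Measure.prod_apply hS,
      lintegral_withDensity_eq_lintegral_mul _
        (show Measurable fun x => ENNReal.ofReal (kd a lam b x) from
          ENNReal.measurable_ofReal.comp (kd_measurable a lam b))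
        (measurable_measure_prodMk_left hS)]
    have hsect : ∀ᵐ x ∂(volume.restrict (Ioi 0)),
        ((fun x => ENNReal.ofReal (kd a lam b x)) * fun x =>
          ((volume.restrict (Ioi 0)).withDensity
            (fun y => ENNReal.ofReal (lam * Real.exp (-(lam * y))))) (Prod.mk x ⁻¹' S)) x
        = ENNReal.ofReal (kd a lam b x * Real.exp (-(lam * ((1-t)/t) * x))) := by
      filter_upwards [ae_restrict_mem measurableSet_Ioi, hnn] with x hx hkx
      have hrx : 0 < (1-t)/t * x := by
        apply mul_pos (div_pos (by linarith) ht0) hx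
      have hpre : Prod.mk x ⁻¹' S = Ici ((1-t)/t * x) := by
        ext y
        simp only [hSdef, mem_preimage, mem_inter_iff, mem_setOf_eq, mem_Ici]
        constructor
        · rintro ⟨-, -, h⟩; exact h
        · intro h; exact ⟨hx, lt_of_lt_of_le hrx h, h⟩
      simp only [Pi.mul_apply]
      rw [hpre, tailY hlam hrx, ← ENNReal.ofReal_mul hkx]
      congr 2
      ring
    rw [lintegral_congr_ae hsect,
      ← ofReal_integral_eq_lintegral_ofReal (kd_integrableOn a lam ha hlam b hs0)
        (by filter_upwards [hnn] with x hkx;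
            exact mul_nonneg hkx (Real.exp_pos _).le),
      kd_integral a lam ha hlam b hb hs0]
    congr 3
    rw [show lam + lam * ((1-t)/t) = lam / t by field_simp; ring]
    rw [div_div_eq_mul_div, mul_comm lam t, mul_div_assoc, div_self hlam.ne', mul_one]
  apply MeasureTheory.Measure.ext_of_Iic
  intro t
  rcases le_or_gt t 0 with ht | ht0
  · -- t ≤ 0 : both sides vanish
    rw [Measure.map_apply hZm measurableSet_Iic]
    have hempty : Iic t ∩ Ioo (0:ℝ) 1 = ∅ := by
      apply eq_empty_iff_forall_notMem.mpr
      rintro z ⟨hz1, hz2, -⟩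
      simp only [mem_Iic] at hz1
      linarith
    rw [hν, withDensity_apply _ measurableSet_Iic,
      Measure.restrict_restrict measurableSet_Iic, hempty, Measure.restrict_empty,
      lintegral_zero_measure]
    apply measure_eq_zero_iff_ae_notMem.mpr
    filter_upwards [hXpos, hYpos] with ω hx hy
    simp only [mem_preimage, mem_Iic, not_le]
    exact lt_of_le_of_lt ht (div_pos hx (by linarith))
  rcases lt_or_ge t 1 with ht1 | ht1
  · -- 0 < t < 1
    rw [hlhs t ht0 ht1, hν]
    refine (nu_val a ha b hb ht0 ht1 measurableSet_Iic ?_).symm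
    ext z
    simp only [mem_inter_iff, mem_Iic, mem_Ioo, mem_Ioc]
    constructor
    · rintro ⟨h1, h2, h3⟩; exact ⟨h2, h1⟩
    · rintro ⟨h1, h2⟩; exact ⟨h2, h1, lt_of_le_of_lt h2 ht1⟩
  · -- 1 ≤ t : both sides are 1
    have hlhs1 : (P.map (fun ω => X ω / (X ω + Y ω))) (Iic t) = 1 := by
      rw [Measure.map_apply hZm measurableSet_Iic]
      have hae1 : (fun ω => X ω / (X ω + Y ω)) ⁻¹' Iic t =ᵐ[P] (univ : Set Ω) := by
        rw [Filter.eventuallyEq_set]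
        filter_upwards [hXpos, hYpos] with ω hx hy
        simp only [mem_preimage, mem_Iic, mem_univ, iff_true]
        have : X ω / (X ω + Y ω) < 1 := (div_lt_one (by linarith)).mpr (by linarith)
        linarith
      rw [measure_congr hae1, measure_univ]
    rw [hlhs1]
    have h1 : ν (Iic t) = ν (Ioo 0 1) := by
      rw [hν, withDensity_apply _ measurableSet_Iic, withDensity_apply _ measurableSet_Ioo,
        Measure.restrict_restrict measurableSet_Iic,
        Measure.restrict_restrict measurableSet_Ioo, inter_self]
      have hiic : Iic t ∩ Ioo (0:ℝ) 1 = Ioo 0 1 :=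
        inter_eq_right.mpr fun z hz => le_trans hz.2.le ht1
      rw [hiic]
    set tn : ℕ → ℝ := fun n => 1 - ((n:ℝ)+2)⁻¹ with htn
    have htninv : ∀ n : ℕ, (0:ℝ) < ((n:ℝ)+2)⁻¹ := fun n => by positivity
    have htninv1 : ∀ n : ℕ, ((n:ℝ)+2)⁻¹ < 1 := fun n => by
      rw [inv_lt_one_iff₀]; right; have : (0:ℝ) ≤ (n:ℝ) := n.cast_nonneg; linarith
    have htn0 : ∀ n, 0 < tn n := fun n => by
      simp only [htn]; linarith [htninv1 n]
    have htn1 : ∀ n, tn n < 1 := fun n => by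
      simp only [htn]; linarith [htninv n]
    have hmono : Monotone fun n : ℕ => Ioc (0:ℝ) (tn n) := by
      intro n m hnm
      apply Ioc_subset_Ioc_right
      simp only [htn]
      have hc : (n:ℝ) ≤ (m:ℝ) := Nat.cast_le.mpr hnm
      have : ((m:ℝ)+2)⁻¹ ≤ ((n:ℝ)+2)⁻¹ := by
        apply inv_anti₀ (by positivity) (by linarith)
      linarith
    have hunion : ⋃ n, Ioc (0:ℝ) (tn n) = Ioo 0 1 := by
      ext z
      simp only [mem_iUnion, mem_Ioc, mem_Ioo]
      constructor
      · rintro ⟨n, h1, h2⟩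
        exact ⟨h1, lt_of_le_of_lt h2 (htn1 n)⟩
      · rintro ⟨h1, h2⟩
        obtain ⟨n, hn⟩ := exists_nat_one_div_lt (show (0:ℝ) < 1 - z by linarith)
        refine ⟨n, h1, ?_⟩
        have h3 : ((n:ℝ)+2)⁻¹ ≤ 1/((n:ℝ)+1) := by
          rw [one_div]
          apply inv_anti₀ (by positivity) (by linarith)
        simp only [htn]
        linarith
    have htend1 := tendsto_measure_iUnion_atTop (μ := ν) hmono
    rw [hunion] at htend1
    have hval : ∀ n, ν (Ioc 0 (tn n)) = ENNReal.ofReal (1 - (1 - (tn n)^a)^b) := by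
      intro n
      rw [hν]
      exact nu_val a ha b hb (htn0 n) (htn1 n) measurableSet_Ioc
        (inter_eq_left.mpr fun z hz => ⟨hz.1, lt_of_le_of_lt hz.2 (htn1 n)⟩)
    have htntend : Filter.Tendsto tn Filter.atTop (nhds 1) := by
      have h0 : Filter.Tendsto (fun n : ℕ => ((n:ℝ)+2)⁻¹) Filter.atTop (nhds 0) := by
        apply squeeze_zero (fun n => by positivity)
          (g := fun n : ℕ => 1 / ((n:ℝ) + 1)) ?_
          tendsto_one_div_add_atTop_nhds_zero_nat
        intro n
        simp only [one_div]
        exact inv_anti₀ (by positivity) (by linarith)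
      simpa using tendsto_const_nhds.sub h0
    have hc : ContinuousAt (fun u : ℝ => ENNReal.ofReal (1 - (1-u^a)^b)) 1 := by
      apply ENNReal.continuous_ofReal.continuousAt.comp
      apply ContinuousAt.sub continuousAt_const
      apply ContinuousAt.pow
      apply ContinuousAt.sub continuousAt_const
      exact Real.continuousAt_rpow_const 1 a (Or.inl one_ne_zero)
    have htend2 : Filter.Tendsto (fun n => ENNReal.ofReal (1 - (1 - (tn n)^a)^b))
        Filter.atTop (nhds 1) := by
      have := hc.tendsto.comp htntend
      simpa [Function.comp_def, Real.one_rpow, zero_pow hb.ne'] using this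
    have hfull : ν (Ioo 0 1) = 1 :=
      tendsto_nhds_unique (htend1.congr fun n => (hval n).symm ▸ rfl) htend2
    rw [h1, hfull]
end

section
/- Let α > 0, β > 0, λ > 0, ρ ≥ 0, δ ∈ ℝ, and set K = 1 + ρ - 2*δ*α/(α+β) + δ^2*α*(α+1)/((α+β)*(α+β+1)), π_0 = (1+ρ)/K, π_1 = -2*α*δ/((α+β)*K), π_2 = α*(α+1)*δ^2/((α+β)*(α+β+1)*K). Let X and Y be independent random variables on a probability space, each almost surely positive, where X has Lebesgue density f_X(x) = Σ_{k=0}^{2} π_k * λ^{α+k} * x^{α+k-1} * exp(-λ*x) / Γ(α+k) for x > 0 (assumed nonnegative), and Y has the Gamma(β,λ) density f_Y(y) = λ^β * y^{β-1} * exp(-λ*y) / Γ(β) for y > 0. Then Z = X/(X+Y) has the bimodal beta density f_Z(z) = (ρ + (1 - δ*z)^2) * z^{α-1} * (1-z)^{β-1} / (K * B(α,β)) for z ∈ (0,1). -/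
open MeasureTheory ProbabilityTheory Real Set
open scoped ENNReal

lemma my_lintegral_image_eq_lintegral_abs_deriv_mul {s : Set ℝ} {f f' : ℝ → ℝ}
    (hs : MeasurableSet s) (hf' : ∀ x ∈ s, HasDerivWithinAt f (f' x) s x)
    (hf : InjOn f s) (g : ℝ → ℝ≥0∞) :
    ∫⁻ x in f '' s, g x = ∫⁻ x in s, ENNReal.ofReal |f' x| * g (f x) := by
  simpa only [ContinuousLinearMap.det_toSpanSingleton] using
    MeasureTheory.lintegral_image_eq_lintegral_abs_det_fderiv_mul volume hs
      (fun x hx => (hf' x hx).hasFDerivWithinAt) hf g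

lemma my_integrableOn_rpow_mul_exp_neg {q r : ℝ} (hq : 0 < q) (hr : 0 < r) :
    IntegrableOn (fun y : ℝ => y ^ (q - 1) * Real.exp (-(r * y))) (Ioi 0) := by
  have h := Real.GammaIntegral_convergent hq
  have h2 : IntegrableOn (fun x : ℝ => Real.exp (-(r * x)) * (r * x) ^ (q - 1)) (Ioi 0) := by
    have := (integrableOn_Ioi_comp_mul_left_iff
      (fun x : ℝ => Real.exp (-x) * x ^ (q - 1)) 0 hr).2 (by simpa using h)
    simpa using this
  have h3 : IntegrableOn (fun x : ℝ => r ^ (1 - q) *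
      (Real.exp (-(r * x)) * (r * x) ^ (q - 1))) (Ioi 0) := h2.const_mul (r ^ (1 - q))
  apply h3.congr_fun ?_ measurableSet_Ioi
  intro x hx
  have hx0 : (0:ℝ) < x := hx
  simp only
  rw [Real.mul_rpow hr.le hx0.le, show (1 : ℝ) - q = -(q-1) by ring,
    Real.rpow_neg hr.le]
  have hrq : r ^ (q-1) ≠ 0 := (Real.rpow_pos_of_pos hr _).ne'
  field_simp

/-- Key measure-theoretic step: the law of `X/(X+Y)` when `X, Y` have densities
`gX, gY` supported on `Ioi 0`. -/
lemma aux_map_ratio (gX gY fZ : ℝ → ℝ) (mgX : Measurable gX) (mgY : Measurable gY)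
    (hgX0 : ∀ x ∈ Ioi (0:ℝ), 0 ≤ gX x) (hgY0 : ∀ y ∈ Ioi (0:ℝ), 0 ≤ gY y)
    (hint : ∀ z ∈ Ioo (0:ℝ) 1,
      IntegrableOn (fun y => y / (1-z)^2 * gX (y * z / (1-z)) * gY y) (Ioi 0))
    (hkey : ∀ z ∈ Ioo (0:ℝ) 1,
      ∫ y in Ioi (0:ℝ), y / (1-z)^2 * gX (y * z / (1-z)) * gY y = fZ z) :
    (((volume.restrict (Ioi 0)).withDensity fun x => ENNReal.ofReal (gX x)).prod
      ((volume.restrict (Ioi 0)).withDensity fun y => ENNReal.ofReal (gY y))).map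
        (fun p : ℝ × ℝ => p.1 / (p.1 + p.2))
    = (volume.restrict (Ioo 0 1)).withDensity fun z => ENNReal.ofReal (fZ z) := by
  have hφm : Measurable fun p : ℝ × ℝ => p.1 / (p.1 + p.2) :=
    measurable_fst.div (measurable_fst.add measurable_snd)
  set GX : ℝ → ℝ≥0∞ := fun x => ENNReal.ofReal (gX x) with hGXdef
  set GY : ℝ → ℝ≥0∞ := fun y => ENNReal.ofReal (gY y) with hGYdef
  have mGX : Measurable GX := mgX.ennreal_ofReal
  have mGY : Measurable GY := mgY.ennreal_ofReal
  set μX : Measure ℝ := (volume.restrict (Ioi 0)).withDensity GX with hμX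
  refine Measure.ext fun s hs => ?_
  have hT : ∀ y : ℝ, MeasurableSet ((fun x : ℝ => x / (x + y)) ⁻¹' s) := fun y =>
    (measurable_id.div (measurable_id.add measurable_const)) hs
  rw [Measure.map_apply hφm hs, Measure.prod_apply_symm (hφm hs)]
  rw [lintegral_withDensity_eq_lintegral_mul _ mGY
    (measurable_measure_prodMk_right (hφm hs))]
  -- key1 : inner slice measure as z-integral
  have key1 : ∀ y ∈ Ioi (0:ℝ),
      μX ((fun x : ℝ => x / (x + y)) ⁻¹' s)
      = ∫⁻ z in Ioo 0 1,
          s.indicator (fun z => ENNReal.ofReal (y / (1 - z) ^ 2) * GX (y * z / (1 - z))) z := by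
    intro y hy
    have hy0 : (0:ℝ) < y := hy
    have hfy : ∀ z ∈ Ioo (0:ℝ) 1, HasDerivWithinAt (fun z => y * z / (1 - z))
        (y / (1 - z) ^ 2) (Ioo 0 1) z := by
      intro z hz
      have hz1 : (1:ℝ) - z ≠ 0 := by have := hz.2; intro h; nlinarith
      have h1 : HasDerivAt (fun z : ℝ => y * z) y z := by
        simpa using (hasDerivAt_id z).const_mul y
      have h2 : HasDerivAt (fun z : ℝ => 1 - z) (-1) z := by
        simpa using (hasDerivAt_id z).const_sub 1
      have h3 := h1.div h2 hz1
      have : (y * (1 - z) - y * z * (-1)) / (1 - z) ^ 2 = y / (1 - z) ^ 2 := by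
        congr 1; ring
      rw [this] at h3
      exact h3.hasDerivWithinAt
    have himg : (fun z => y * z / (1 - z)) '' Ioo 0 1 = Ioi 0 := by
      ext x
      constructor
      · rintro ⟨z, hz, rfl⟩
        exact div_pos (mul_pos hy0 hz.1) (by linarith [hz.2])
      · intro hx
        have hx0 : (0:ℝ) < x := hx
        refine ⟨x / (x + y), ⟨div_pos hx0 (by linarith), ?_⟩, ?_⟩
        · rw [div_lt_one (by linarith)]; linarith
        · have hxy : x + y ≠ 0 := by positivity
          simp only
          rw [div_eq_iff]
          · field_simp
            ring
          · intro h
            apply hxy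
            have : x / (x + y) = 1 := by linarith
            rw [div_eq_one_iff_eq hxy] at this
            linarith
    have hinj : InjOn (fun z => y * z / (1 - z)) (Ioo 0 1) := by
      intro z1 h1 z2 h2 heq
      simp only at heq
      have e1 : (1:ℝ) - z1 ≠ 0 := by have := h1.2; intro h; nlinarith
      have e2 : (1:ℝ) - z2 ≠ 0 := by have := h2.2; intro h; nlinarith
      field_simp at heq
      nlinarith [heq]
    rw [hμX, withDensity_apply _ (hT y), ← lintegral_indicator (hT y), ← himg,
      my_lintegral_image_eq_lintegral_abs_deriv_mul measurableSet_Ioo hfy hinj]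
    refine setLIntegral_congr_fun measurableSet_Ioo (fun z hz => ?_)
    have hz1 : (0:ℝ) < 1 - z := by linarith [hz.2]
    have habs : |y / (1 - z) ^ 2| = y / (1 - z) ^ 2 := abs_of_nonneg (by positivity)
    have hval : y * z / (1 - z) / (y * z / (1 - z) + y) = z := by
      have hden : y * z / (1 - z) + y = y / (1 - z) := by
        field_simp
        ring
      rw [hden, div_div_div_cancel_right₀ (hc := hz1.ne')]
      exact mul_div_cancel_left₀ z hy0.ne'
    have hmem : (y * z / (1 - z)) ∈ (fun x : ℝ => x / (x + y)) ⁻¹' s ↔ z ∈ s := by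
      rw [Set.mem_preimage]
      exact Iff.of_eq (congrArg (· ∈ s) hval)
    by_cases hzs : z ∈ s
    · rw [Set.indicator_of_mem (hmem.2 hzs), Set.indicator_of_mem hzs, habs]
    · rw [Set.indicator_of_notMem (fun h => hzs (hmem.1 h)),
        Set.indicator_of_notMem hzs, mul_zero]
  have hpre : (fun y : ℝ => μX ((fun x => (x, y)) ⁻¹'
        ((fun p : ℝ × ℝ => p.1 / (p.1 + p.2)) ⁻¹' s)))
      = fun y : ℝ => μX ((fun x : ℝ => x / (x + y)) ⁻¹' s) := rfl
  rw [hpre]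
  -- step A: rewrite the y-integral
  have stepA : ∫⁻ y, (GY * fun y => μX ((fun x : ℝ => x / (x + y)) ⁻¹' s)) y
        ∂(volume.restrict (Ioi 0))
      = ∫⁻ y in Ioi 0, ∫⁻ z in Ioo 0 1,
          s.indicator (fun z => GY y *
            (ENNReal.ofReal (y / (1 - z) ^ 2) * GX (y * z / (1 - z)))) z := by
    refine setLIntegral_congr_fun measurableSet_Ioi (fun y hy => ?_)
    simp only [Pi.mul_apply]
    rw [key1 y hy, ← lintegral_const_mul' _ _ ENNReal.ofReal_ne_top]
    refine setLIntegral_congr_fun measurableSet_Ioo (fun z hz => ?_)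
    by_cases hzs : z ∈ s
    · rw [Set.indicator_of_mem hzs, Set.indicator_of_mem hzs]
    · rw [Set.indicator_of_notMem hzs, Set.indicator_of_notMem hzs, mul_zero]
  rw [stepA]
  -- swap the order of integration
  have hswap : ∫⁻ y in Ioi (0:ℝ), ∫⁻ z in Ioo (0:ℝ) 1,
        s.indicator (fun z => GY y *
          (ENNReal.ofReal (y / (1 - z) ^ 2) * GX (y * z / (1 - z)))) z
      = ∫⁻ z in Ioo (0:ℝ) 1, ∫⁻ y in Ioi (0:ℝ),
          s.indicator (fun z => GY y *
            (ENNReal.ofReal (y / (1 - z) ^ 2) * GX (y * z / (1 - z)))) z := by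
    apply lintegral_lintegral_swap
    have heq : (Function.uncurry fun y z =>
        s.indicator (fun z => GY y *
          (ENNReal.ofReal (y / (1 - z) ^ 2) * GX (y * z / (1 - z)))) z)
        = fun p : ℝ × ℝ => (Prod.snd ⁻¹' s).indicator
            (fun p : ℝ × ℝ => GY p.1 * (ENNReal.ofReal (p.1 / (1 - p.2) ^ 2) *
              GX (p.1 * p.2 / (1 - p.2)))) p := by
      funext p
      by_cases hp : p.2 ∈ s
      · simp only [Function.uncurry, Set.indicator_of_mem hp,
          Set.indicator_of_mem (show p ∈ Prod.snd ⁻¹' s from hp)]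
      · simp only [Function.uncurry, Set.indicator_of_notMem hp,
          Set.indicator_of_notMem (show p ∉ Prod.snd ⁻¹' s from hp)]
    rw [heq]
    refine (Measurable.indicator ?_ (measurable_snd hs)).aemeasurable
    exact (mGY.comp measurable_fst).mul
      ((Measurable.ennreal_ofReal (measurable_fst.div
          ((measurable_const.sub measurable_snd).pow_const 2))).mul
        (mGX.comp ((measurable_fst.mul measurable_snd).div
          (measurable_const.sub measurable_snd))))
  rw [hswap]
  -- evaluate the inner y-integral
  have step2 : ∀ z ∈ Ioo (0:ℝ) 1,
      (∫⁻ y in Ioi (0:ℝ), s.indicator (fun z => GY y *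
        (ENNReal.ofReal (y / (1 - z) ^ 2) * GX (y * z / (1 - z)))) z)
      = s.indicator (fun z => ENNReal.ofReal (fZ z)) z := by
    intro z hz
    have hz1 : (0:ℝ) < 1 - z := by linarith [hz.2]
    by_cases hzs : z ∈ s
    · rw [Set.indicator_of_mem hzs]
      simp only [Set.indicator_of_mem hzs]
      have hcongr : ∫⁻ y in Ioi (0:ℝ), GY y *
            (ENNReal.ofReal (y / (1 - z) ^ 2) * GX (y * z / (1 - z)))
          = ∫⁻ y in Ioi (0:ℝ),
              ENNReal.ofReal (y / (1 - z) ^ 2 * gX (y * z / (1 - z)) * gY y) := by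
        refine setLIntegral_congr_fun measurableSet_Ioi (fun y hy => ?_)
        have hy0 : (0:ℝ) < y := hy
        have harg : 0 < y * z / (1 - z) := div_pos (mul_pos hy0 hz.1) hz1
        rw [ENNReal.ofReal_mul (mul_nonneg (by positivity) (hgX0 _ harg)),
          ENNReal.ofReal_mul (by positivity)]
        ring
      rw [hcongr, ← ofReal_integral_eq_lintegral_ofReal (hint z hz) ?_, hkey z hz]
      refine (ae_restrict_iff' measurableSet_Ioi).2 (ae_of_all _ fun y hy => ?_)
      have hy0 : (0:ℝ) < y := hy
      have harg : 0 < y * z / (1 - z) := div_pos (mul_pos hy0 hz.1) hz1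
      exact mul_nonneg (mul_nonneg (by positivity) (hgX0 _ harg)) (hgY0 y hy)
    · rw [Set.indicator_of_notMem hzs]
      simp only [Set.indicator_of_notMem hzs]
      simp
  rw [setLIntegral_congr_fun measurableSet_Ioo step2]
  rw [withDensity_apply _ hs, ← lintegral_indicator hs]

set_option maxHeartbeats 1000000 in
theorem bimodal_beta_ratio
    {Ω : Type*} [MeasurableSpace Ω] (P : Measure Ω) [IsProbabilityMeasure P]
    (α β lam ρ δ : ℝ) (hα : 0 < α) (hβ : 0 < β) (hlam : 0 < lam) (hρ : 0 ≤ ρ)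
    (K p0 p1 p2 : ℝ)
    (hK : K = 1 + ρ - 2 * δ * α / (α + β) +
      δ ^ 2 * α * (α + 1) / ((α + β) * (α + β + 1)))
    (hp0 : p0 = (1 + ρ) / K)
    (hp1 : p1 = -(2 * α * δ) / ((α + β) * K))
    (hp2 : p2 = α * (α + 1) * δ ^ 2 / ((α + β) * (α + β + 1) * K))
    (X Y : Ω → ℝ) (hXm : Measurable X) (hYm : Measurable Y)
    (hindep : IndepFun X Y P)
    (hXpos : ∀ᵐ ω ∂P, 0 < X ω) (hYpos : ∀ᵐ ω ∂P, 0 < Y ω)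
    (fX : ℝ → ℝ)
    (hfX : ∀ x ∈ Ioi (0:ℝ), fX x =
      p0 * lam ^ α * x ^ (α - 1) * Real.exp (-(lam * x)) / Real.Gamma α +
      p1 * lam ^ (α + 1) * x ^ α * Real.exp (-(lam * x)) / Real.Gamma (α + 1) +
      p2 * lam ^ (α + 2) * x ^ (α + 1) * Real.exp (-(lam * x)) / Real.Gamma (α + 2))
    (hfX0 : ∀ x ∈ Ioi (0:ℝ), 0 ≤ fX x)
    (hX : P.map X = (volume.restrict (Ioi 0)).withDensity
      (fun x => ENNReal.ofReal (fX x)))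
    (hY : P.map Y = (volume.restrict (Ioi 0)).withDensity
      (fun y => ENNReal.ofReal (lam ^ β * y ^ (β - 1) * Real.exp (-(lam * y)) /
        Real.Gamma β))) :
    P.map (fun ω => X ω / (X ω + Y ω)) = (volume.restrict (Ioo 0 1)).withDensity
      (fun z => ENNReal.ofReal ((ρ + (1 - δ * z) ^ 2) * z ^ (α - 1) * (1 - z) ^ (β - 1) /
        (K * (Real.Gamma α * Real.Gamma β / Real.Gamma (α + β))))) := by
  have hαβ : (0:ℝ) < α + β := by linarith
  have hΓα : 0 < Real.Gamma α := Real.Gamma_pos_of_pos hα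
  have hΓα1 : 0 < Real.Gamma (α+1) := Real.Gamma_pos_of_pos (by linarith)
  have hΓα2 : 0 < Real.Gamma (α+2) := Real.Gamma_pos_of_pos (by linarith)
  have hΓβ : 0 < Real.Gamma β := Real.Gamma_pos_of_pos hβ
  have hΓαβ : 0 < Real.Gamma (α+β) := Real.Gamma_pos_of_pos hαβ
  have hK0 : 0 < K := by
    have hKmul : K * ((α+β)^2 * (α+β+1)) =
        (1+ρ)*(α+β)^2*(α+β+1) - 2*δ*α*(α+β)*(α+β+1) + δ^2*α*(α+1)*(α+β) := by
      rw [hK]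
      field_simp
    have hE : 0 < (1+ρ)*(α+β)^2*(α+β+1) - 2*δ*α*(α+β)*(α+β+1) + δ^2*α*(α+1)*(α+β) := by
      nlinarith [mul_nonneg hαβ.le (sq_nonneg (α*(α+1)*δ - α*(α+β+1))),
        mul_pos (mul_pos (mul_pos hα hβ) hαβ) (show (0:ℝ) < α+β+1 by linarith),
        mul_nonneg hρ (by positivity : (0:ℝ) ≤ (α+β)^2*(α+β+1)),
        mul_pos hα (show (0:ℝ) < α+1 by linarith)]
    have hP : (0:ℝ) < (α+β)^2 * (α+β+1) := by positivity
    nlinarith [hKmul, hE, hP]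
  have hKne : K ≠ 0 := hK0.ne'
  -- the explicit densities
  have mexp : Measurable fun x : ℝ => Real.exp (-(lam * x)) :=
    ((measurable_id'.const_mul lam).neg).exp
  have mgX : Measurable (fun x : ℝ =>
      p0 * lam ^ α * x ^ (α - 1) * Real.exp (-(lam * x)) / Real.Gamma α +
      p1 * lam ^ (α + 1) * x ^ α * Real.exp (-(lam * x)) / Real.Gamma (α + 1) +
      p2 * lam ^ (α + 2) * x ^ (α + 1) * Real.exp (-(lam * x)) / Real.Gamma (α + 2)) := by
    refine Measurable.add (Measurable.add ?_ ?_) ?_ <;>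
      exact (((measurable_id'.pow_const _).const_mul _).mul mexp).div_const _
  have mgY : Measurable (fun y : ℝ =>
      lam ^ β * y ^ (β - 1) * Real.exp (-(lam * y)) / Real.Gamma β) :=
    (((measurable_id'.pow_const _).const_mul _).mul mexp).div_const _
  have hgX0 : ∀ x ∈ Ioi (0:ℝ),
      0 ≤ p0 * lam ^ α * x ^ (α - 1) * Real.exp (-(lam * x)) / Real.Gamma α +
      p1 * lam ^ (α + 1) * x ^ α * Real.exp (-(lam * x)) / Real.Gamma (α + 1) +
      p2 * lam ^ (α + 2) * x ^ (α + 1) * Real.exp (-(lam * x)) / Real.Gamma (α + 2) := by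
    intro x hx
    rw [← hfX x hx]
    exact hfX0 x hx
  have hgY0 : ∀ y ∈ Ioi (0:ℝ),
      0 ≤ lam ^ β * y ^ (β - 1) * Real.exp (-(lam * y)) / Real.Gamma β := by
    intro y hy
    have hy0 : (0:ℝ) < y := hy
    have h1 : (0:ℝ) < y ^ (β - 1) := Real.rpow_pos_of_pos hy0 _
    have h2 : (0:ℝ) < lam ^ β := Real.rpow_pos_of_pos hlam _
    positivity
  have hX' : P.map X = (volume.restrict (Ioi 0)).withDensity fun x => ENNReal.ofReal
      (p0 * lam ^ α * x ^ (α - 1) * Real.exp (-(lam * x)) / Real.Gamma α +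
      p1 * lam ^ (α + 1) * x ^ α * Real.exp (-(lam * x)) / Real.Gamma (α + 1) +
      p2 * lam ^ (α + 2) * x ^ (α + 1) * Real.exp (-(lam * x)) / Real.Gamma (α + 2)) := by
    rw [hX]
    apply withDensity_congr_ae
    filter_upwards [ae_restrict_mem measurableSet_Ioi] with x hx
    rw [hfX x hx]
  have hpair : P.map (fun ω => (X ω, Y ω)) = (P.map X).prod (P.map Y) :=
    (indepFun_iff_map_prod_eq_prod_map_map hXm.aemeasurable hYm.aemeasurable).1 hindep
  have hφm : Measurable fun p : ℝ × ℝ => p.1 / (p.1 + p.2) :=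
    measurable_fst.div (measurable_fst.add measurable_snd)
  have hcomp : P.map (fun ω => X ω / (X ω + Y ω))
      = ((P.map X).prod (P.map Y)).map (fun p : ℝ × ℝ => p.1 / (p.1 + p.2)) := by
    rw [← hpair, Measure.map_map hφm (hXm.prodMk hYm)]
    rfl
  rw [hcomp, hX', hY]
  -- the analytic core
  have main : ∀ z ∈ Ioo (0:ℝ) 1,
      IntegrableOn (fun y : ℝ => y / (1-z)^2 *
        (p0 * lam ^ α * (y * z / (1-z)) ^ (α - 1) * Real.exp (-(lam * (y * z / (1-z)))) / Real.Gamma α +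
         p1 * lam ^ (α + 1) * (y * z / (1-z)) ^ α * Real.exp (-(lam * (y * z / (1-z)))) / Real.Gamma (α + 1) +
         p2 * lam ^ (α + 2) * (y * z / (1-z)) ^ (α + 1) * Real.exp (-(lam * (y * z / (1-z)))) / Real.Gamma (α + 2)) *
        (lam ^ β * y ^ (β - 1) * Real.exp (-(lam * y)) / Real.Gamma β)) (Ioi 0) ∧
      ∫ y in Ioi (0:ℝ), y / (1-z)^2 *
        (p0 * lam ^ α * (y * z / (1-z)) ^ (α - 1) * Real.exp (-(lam * (y * z / (1-z)))) / Real.Gamma α +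
         p1 * lam ^ (α + 1) * (y * z / (1-z)) ^ α * Real.exp (-(lam * (y * z / (1-z)))) / Real.Gamma (α + 1) +
         p2 * lam ^ (α + 2) * (y * z / (1-z)) ^ (α + 1) * Real.exp (-(lam * (y * z / (1-z)))) / Real.Gamma (α + 2)) *
        (lam ^ β * y ^ (β - 1) * Real.exp (-(lam * y)) / Real.Gamma β)
      = (ρ + (1 - δ * z) ^ 2) * z ^ (α - 1) * (1 - z) ^ (β - 1) /
          (K * (Real.Gamma α * Real.Gamma β / Real.Gamma (α + β))) := by
    intro z hz
    have hz0 : (0:ℝ) < z := hz.1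
    have hz1 : (0:ℝ) < 1 - z := by linarith [hz.2]
    have hw0 : (0:ℝ) < z / (1-z) := div_pos hz0 hz1
    have hsplit : ∀ t : ℝ, 0 < t → ∀ a : ℝ, t ^ a = t ^ (a - 1) * t := by
      intro t ht a
      have h := Real.rpow_add ht (a-1) 1
      rw [sub_add_cancel] at h
      rw [h, Real.rpow_one]
    have hu0 : (0:ℝ) < lam / (1-z) := div_pos hlam hz1
    set A0 : ℝ := p0 * lam ^ α * (z/(1-z)) ^ (α-1) * lam ^ β /
      (Real.Gamma α * Real.Gamma β * (1-z)^2) with hA0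
    set A1 : ℝ := p1 * lam ^ (α+1) * (z/(1-z)) ^ α * lam ^ β /
      (Real.Gamma (α+1) * Real.Gamma β * (1-z)^2) with hA1
    set A2 : ℝ := p2 * lam ^ (α+2) * (z/(1-z)) ^ (α+1) * lam ^ β /
      (Real.Gamma (α+2) * Real.Gamma β * (1-z)^2) with hA2
    have h_eq : ∀ y ∈ Ioi (0:ℝ), y / (1-z)^2 *
        (p0 * lam ^ α * (y * z / (1-z)) ^ (α - 1) * Real.exp (-(lam * (y * z / (1-z)))) / Real.Gamma α +
         p1 * lam ^ (α + 1) * (y * z / (1-z)) ^ α * Real.exp (-(lam * (y * z / (1-z)))) / Real.Gamma (α + 1) +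
         p2 * lam ^ (α + 2) * (y * z / (1-z)) ^ (α + 1) * Real.exp (-(lam * (y * z / (1-z)))) / Real.Gamma (α + 2)) *
        (lam ^ β * y ^ (β - 1) * Real.exp (-(lam * y)) / Real.Gamma β)
        = A0 * (y ^ (α + β - 1) * Real.exp (-(lam / (1-z) * y)))
        + A1 * (y ^ (α + β + 1 - 1) * Real.exp (-(lam / (1-z) * y)))
        + A2 * (y ^ (α + β + 2 - 1) * Real.exp (-(lam / (1-z) * y))) := by
      intro y hy
      have hy0 : (0:ℝ) < y := hy
      rw [show y * z / (1-z) = y * (z/(1-z)) by ring]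
      simp only [Real.mul_rpow hy0.le hw0.le]
      rw [show Real.exp (-(lam / (1-z) * y))
          = Real.exp (-(lam * (y * (z/(1-z))))) * Real.exp (-(lam * y)) by
        rw [← Real.exp_add]
        congr 1
        field_simp
        ring]
      rw [show y ^ (α + β - 1) = y ^ (α-1) * y ^ (β-1) * y by
        rw [show α + β - 1 = (α-1) + ((β-1) + 1) by ring, Real.rpow_add hy0,
          Real.rpow_add hy0, Real.rpow_one, mul_assoc]]
      rw [show y ^ (α + β + 1 - 1) = y ^ (α-1) * y ^ (β-1) * y * y by
        rw [show α + β + 1 - 1 = (α-1) + ((β-1) + (1 + 1)) by ring, Real.rpow_add hy0,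
          Real.rpow_add hy0, Real.rpow_add hy0, Real.rpow_one]
        ring]
      rw [show y ^ (α + β + 2 - 1) = y ^ (α-1) * y ^ (β-1) * y * y * y by
        rw [show α + β + 2 - 1 = (α-1) + ((β-1) + (1 + (1 + 1))) by ring, Real.rpow_add hy0,
          Real.rpow_add hy0, Real.rpow_add hy0, Real.rpow_add hy0, Real.rpow_one]
        ring]
      rw [hsplit y hy0 α]
      rw [show y ^ (α+1) = y ^ (α-1) * y * y by
        rw [show α + 1 = (α-1) + (1 + 1) by ring, Real.rpow_add hy0, Real.rpow_add hy0,
          Real.rpow_one]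
        ring]
      rw [hA0, hA1, hA2]
      have hn1 : Real.Gamma α ≠ 0 := hΓα.ne'
      have hn2 : Real.Gamma (α+1) ≠ 0 := hΓα1.ne'
      have hn3 : Real.Gamma (α+2) ≠ 0 := hΓα2.ne'
      have hn4 : Real.Gamma β ≠ 0 := hΓβ.ne'
      have hn5 : ((1-z)^2 : ℝ) ≠ 0 := by positivity
      field_simp
    have int0 : IntegrableOn (fun y : ℝ => y ^ (α + β - 1) *
        Real.exp (-(lam / (1-z) * y))) (Ioi 0) :=
      my_integrableOn_rpow_mul_exp_neg hαβ hu0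
    have int1 : IntegrableOn (fun y : ℝ => y ^ (α + β + 1 - 1) *
        Real.exp (-(lam / (1-z) * y))) (Ioi 0) :=
      my_integrableOn_rpow_mul_exp_neg (by linarith) hu0
    have int2 : IntegrableOn (fun y : ℝ => y ^ (α + β + 2 - 1) *
        Real.exp (-(lam / (1-z) * y))) (Ioi 0) :=
      my_integrableOn_rpow_mul_exp_neg (by linarith) hu0
    have intsum : IntegrableOn (fun y : ℝ =>
        A0 * (y ^ (α + β - 1) * Real.exp (-(lam / (1-z) * y)))
        + A1 * (y ^ (α + β + 1 - 1) * Real.exp (-(lam / (1-z) * y)))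
        + A2 * (y ^ (α + β + 2 - 1) * Real.exp (-(lam / (1-z) * y)))) (Ioi 0) :=
      ((int0.const_mul A0).add (int1.const_mul A1)).add (int2.const_mul A2)
    constructor
    · exact intsum.congr_fun (fun y hy => (h_eq y hy).symm) measurableSet_Ioi
    · have i01 : IntegrableOn (fun y : ℝ =>
          A0 * (y ^ (α + β - 1) * Real.exp (-(lam / (1-z) * y)))
          + A1 * (y ^ (α + β + 1 - 1) * Real.exp (-(lam / (1-z) * y)))) (Ioi 0) :=
        (int0.const_mul A0).add (int1.const_mul A1)
      rw [setIntegral_congr_fun measurableSet_Ioi h_eq]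
      rw [integral_add i01 (int2.const_mul A2),
        integral_add (int0.const_mul A0) (int1.const_mul A1),
        integral_const_mul, integral_const_mul, integral_const_mul,
        integral_rpow_mul_exp_neg_mul_Ioi hαβ hu0,
        integral_rpow_mul_exp_neg_mul_Ioi (show (0:ℝ) < α + β + 1 by linarith) hu0,
        integral_rpow_mul_exp_neg_mul_Ioi (show (0:ℝ) < α + β + 2 by linarith) hu0]
      -- now pure algebra
      rw [hA0, hA1, hA2, hp0, hp1, hp2]
      have hΓe1 : Real.Gamma (α+1) = α * Real.Gamma α := Real.Gamma_add_one hα.ne'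
      have hΓe2 : Real.Gamma (α+2) = (α+1) * (α * Real.Gamma α) := by
        rw [show α+2 = (α+1)+1 by ring, Real.Gamma_add_one (by linarith), hΓe1]
      have hΓe3 : Real.Gamma (α+β+1) = (α+β) * Real.Gamma (α+β) :=
        Real.Gamma_add_one hαβ.ne'
      have hΓe4 : Real.Gamma (α+β+2) = (α+β+1) * ((α+β) * Real.Gamma (α+β)) := by
        rw [show α+β+2 = (α+β+1)+1 by ring, Real.Gamma_add_one (by linarith), hΓe3]
      rw [hΓe1, hΓe2, hΓe3, hΓe4]
      rw [one_div_div]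
      rw [Real.div_rpow hz1.le hlam.le, Real.div_rpow hz1.le hlam.le,
        Real.div_rpow hz1.le hlam.le, Real.div_rpow hz0.le hz1.le,
        Real.div_rpow hz0.le hz1.le, Real.div_rpow hz0.le hz1.le]
      rw [show lam ^ (α+β) = lam ^ α * lam ^ β by rw [Real.rpow_add hlam],
        show lam ^ (α+β+1) = lam ^ α * lam ^ β * lam by
          rw [show α+β+1 = (α+β)+1 by ring, Real.rpow_add hlam, Real.rpow_add hlam,
            Real.rpow_one],
        show lam ^ (α+β+2) = lam ^ α * lam ^ β * lam * lam by
          rw [show α+β+2 = (α+β)+(1+1) by ring, Real.rpow_add hlam, Real.rpow_add hlam,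
            Real.rpow_add hlam, Real.rpow_one]
          ring,
        show lam ^ (α+1) = lam ^ α * lam by
          rw [Real.rpow_add hlam, Real.rpow_one],
        show lam ^ (α+2) = lam ^ α * lam * lam by
          rw [show α+2 = α+(1+1) by ring, Real.rpow_add hlam, Real.rpow_add hlam,
            Real.rpow_one]
          ring]
      rw [show (1-z) ^ (α+β) = (1-z) ^ (α-1) * (1-z) ^ (β-1) * ((1-z) * (1-z)) by
          rw [show α+β = (α-1) + ((β-1) + (1+1)) by ring, Real.rpow_add hz1,
            Real.rpow_add hz1, Real.rpow_add hz1, Real.rpow_one]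
          ring,
        show (1-z) ^ (α+β+1) = (1-z) ^ (α-1) * (1-z) ^ (β-1) * ((1-z) * (1-z) * (1-z)) by
          rw [show α+β+1 = (α-1) + ((β-1) + (1+(1+1))) by ring, Real.rpow_add hz1,
            Real.rpow_add hz1, Real.rpow_add hz1, Real.rpow_add hz1, Real.rpow_one]
          ring,
        show (1-z) ^ (α+β+2) = (1-z) ^ (α-1) * (1-z) ^ (β-1) *
            ((1-z) * (1-z) * (1-z) * (1-z)) by
          rw [show α+β+2 = (α-1) + ((β-1) + (1+(1+(1+1)))) by ring, Real.rpow_add hz1,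
            Real.rpow_add hz1, Real.rpow_add hz1, Real.rpow_add hz1, Real.rpow_add hz1,
            Real.rpow_one]
          ring,
        hsplit (1-z) hz1 α,
        show (1-z) ^ (α+1) = (1-z) ^ (α-1) * (1-z) * (1-z) by
          rw [show α+1 = (α-1) + (1+1) by ring, Real.rpow_add hz1, Real.rpow_add hz1,
            Real.rpow_one]
          ring,
        hsplit z hz0 α,
        show z ^ (α+1) = z ^ (α-1) * z * z by
          rw [show α+1 = (α-1) + (1+1) by ring, Real.rpow_add hz0, Real.rpow_add hz0,
            Real.rpow_one]
          ring]
      have hzα : z ^ (α-1) ≠ 0 := (Real.rpow_pos_of_pos hz0 _).ne'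
      have hz1α : (1-z) ^ (α-1) ≠ 0 := (Real.rpow_pos_of_pos hz1 _).ne'
      have hz1β : (1-z) ^ (β-1) ≠ 0 := (Real.rpow_pos_of_pos hz1 _).ne'
      have hlamα : lam ^ α ≠ 0 := (Real.rpow_pos_of_pos hlam _).ne'
      have hlamβ : lam ^ β ≠ 0 := (Real.rpow_pos_of_pos hlam _).ne'
      have hαβ1 : α + β + 1 ≠ 0 := by positivity
      have hα1 : α + 1 ≠ 0 := by positivity
      field_simp
      ring
  exact aux_map_ratio _ _ _ mgX mgY hgX0 hgY0 (fun z hz => (main z hz).1)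
    (fun z hz => (main z hz).2)
end
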